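/- arXiv:2409.06186 — 3 statements merged into one kernel-verified Lean document; each statement's English description precedes it below -/
import Mathlib

section
/- Let E ⊂ ℝ^d be a Moran set with |J| = 1. Let M ⊂ Σ^* be a finite cut set consisting of nonempty words, and set L_M = min{|u| : u ∈ M} and K_M = max{|u| : u ∈ M}. Then for every real β with β < min_{L_M ≤ k ≤ K_M} s_k, one has Σ_{u∈M} |J_u|^β > 1. -/
open Metric Set Filter Topology

noncomputable section

/-- A finite word `u = u₁⋯u_k` is valid for the branching sequence `n` if
`1 ≤ u_i ≤ n i` for every `i`. -/
def IsWord (n : ℕ → ℕ) (u : List ℕ) : Prop :=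
  ∀ i : Fin u.length, 1 ≤ u.get i ∧ u.get i ≤ n (i.1 + 1)

/-- An infinite word `v = v₁v₂⋯` (indexed from 1) is valid if `1 ≤ v k ≤ n k`. -/
def IsInfWord (n : ℕ → ℕ) (v : ℕ → ℕ) : Prop :=
  ∀ k, 1 ≤ k → 1 ≤ v k ∧ v k ≤ n k

/-- The cylinder of a finite word: all valid infinite words extending it. -/
def Cylinder (n : ℕ → ℕ) (u : List ℕ) : Set (ℕ → ℕ) :=
  {v | IsInfWord n v ∧ ∀ i : Fin u.length, v (i.1 + 1) = u.get i}

/-- A cut set: a set of valid finite words whose cylinders are pairwise disjoint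
and cover all valid infinite words. -/
def IsCutSet (n : ℕ → ℕ) (A : Set (List ℕ)) : Prop :=
  (∀ u ∈ A, IsWord n u) ∧
  (A.Pairwise fun u w => Cylinder n u ∩ Cylinder n w = ∅) ∧
  {v | IsInfWord n v} ⊆ ⋃ u ∈ A, Cylinder n u

/-- A Moran structure on an ambient metric space `X`, with exponent `d`
(the dimension of the ambient Euclidean space). -/
structure MoranStructure (X : Type) [MetricSpace X] (d : ℕ) where
  n : ℕ → ℕ
  hn : ∀ k, 1 ≤ k → 2 ≤ n k
  c : ℕ → ℕ → ℝ
  hc_pos : ∀ k j, 1 ≤ k → 1 ≤ j → j ≤ n k → 0 < c k j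
  hc_sum : ∀ k, 1 ≤ k → (∑ j ∈ Finset.Icc 1 (n k), c k j ^ (d : ℝ)) ≤ 1
  J : Set X
  hJ_compact : IsCompact J
  hJ_interior : (interior J).Nonempty
  Jmap : List ℕ → Set X
  hJ_nil : Jmap [] = J
  hJ_closed : ∀ u, IsWord n u → IsClosed (Jmap u)
  hJ_sim : ∀ u, IsWord n u → ∃ r : ℝ, 0 < r ∧ ∃ f : X → X,
      (∀ x y, dist (f x) (f y) = r * dist x y) ∧ Jmap u = f '' J
  hJ_sub : ∀ u j, IsWord n (u ++ [j]) → Jmap (u ++ [j]) ⊆ Jmap u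
  hJ_disj : ∀ u j j', IsWord n (u ++ [j]) → IsWord n (u ++ [j']) → j ≠ j' →
      interior (Jmap (u ++ [j])) ∩ interior (Jmap (u ++ [j'])) = ∅
  hJ_ratio : ∀ u j, IsWord n (u ++ [j]) →
      diam (Jmap (u ++ [j])) = c (u.length + 1) j * diam (Jmap u)

namespace MoranStructure

variable {X : Type} [MetricSpace X] {d : ℕ}

/-- The Moran set `E = ⋂_{k≥1} ⋃_{u ∈ Σ^k} J_u`. -/
def E (S : MoranStructure X d) : Set X :=
  ⋂ (k : ℕ) (_ : 1 ≤ k), ⋃ (u : List ℕ) (_ : IsWord S.n u ∧ u.length = k), S.Jmap u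

/-- `c_* = inf_{k,j} c_{k,j}`. -/
def cStar (S : MoranStructure X d) : ℝ :=
  sInf {x : ℝ | ∃ k j, 1 ≤ k ∧ 1 ≤ j ∧ j ≤ S.n k ∧ x = S.c k j}

/-- `s_{δ,θ}`: the least exponent `s` for which some cut set `M` with
`δ^{1/θ} < |J_{u^*}|` and `|J_u| ≤ δ` for all `u ∈ M` satisfies `∑_{u∈M} |J_u|^s = 1`. -/
def sdt (S : MoranStructure X d) (δ θ : ℝ) : ℝ :=
  sInf {s : ℝ | ∃ A : Set (List ℕ), IsCutSet S.n A ∧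
      (∀ u ∈ A, δ ^ (1 / θ) < diam (S.Jmap u.dropLast) ∧ diam (S.Jmap u) ≤ δ) ∧
      ∑' u : A, diam (S.Jmap (u : List ℕ)) ^ s = 1}

/-- `s^θ = limsup_{δ → 0⁺} s_{δ,θ}`. -/
def sUpper (S : MoranStructure X d) (θ : ℝ) : ℝ :=
  limsup (fun δ => S.sdt δ θ) (𝓝[>] (0 : ℝ))

/-- `s_θ = liminf_{δ → 0⁺} s_{δ,θ}`. -/
def sLower (S : MoranStructure X d) (θ : ℝ) : ℝ :=
  liminf (fun δ => S.sdt δ θ) (𝓝[>] (0 : ℝ))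

/-- A Moran structure is homogeneous if at each level all contraction ratios agree. -/
def Homogeneous (S : MoranStructure X d) : Prop :=
  ∀ k j, 1 ≤ k → 1 ≤ j → j ≤ S.n k → S.c k j = S.c k 1

/-- For a homogeneous Moran set, `s_k = - log(n₁⋯n_k) / log(c₁⋯c_k)`. -/
def sHom (S : MoranStructure X d) (k : ℕ) : ℝ :=
  - Real.log (∏ i ∈ Finset.Icc 1 k, (S.n i : ℝ)) /
    Real.log (∏ i ∈ Finset.Icc 1 k, S.c i 1)

/-- `c₁ c₂ ⋯ c_k` for a homogeneous Moran set. -/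
def cHomProd (S : MoranStructure X d) (k : ℕ) : ℝ :=
  ∏ i ∈ Finset.Icc 1 k, S.c i 1

/-- `l = l(·,θ)` is the function given by the defining property
`c₁⋯c_{l(k,θ)} ≤ (c₁⋯c_k)^{1/θ} < c₁⋯c_{l(k,θ)-1}`. -/
def IsLk (S : MoranStructure X d) (θ : ℝ) (l : ℕ → ℕ) : Prop :=
  ∀ k, 1 ≤ k → S.cHomProd (l k) ≤ S.cHomProd k ^ (1 / θ) ∧
    S.cHomProd k ^ (1 / θ) < S.cHomProd (l k - 1)

/-- `c̲_k = min_{1 ≤ j ≤ n_k} c_{k,j}`. -/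
def cMin (S : MoranStructure X d) (k : ℕ) : ℝ :=
  sInf {x : ℝ | ∃ j, 1 ≤ j ∧ j ≤ S.n k ∧ x = S.c k j}

/-- `M_k = max_{u ∈ Σ^k} |J_u|`. -/
def Mk (S : MoranStructure X d) (k : ℕ) : ℝ :=
  sSup {x : ℝ | ∃ u : List ℕ, IsWord S.n u ∧ u.length = k ∧ x = diam (S.Jmap u)}

/-- `M(δ) = {u ∈ Σ^* : |J_u| ≤ δ < |J_{u^*}|}`. -/
def cutM (S : MoranStructure X d) (δ : ℝ) : Set (List ℕ) :=
  {u : List ℕ | IsWord S.n u ∧ diam (S.Jmap u) ≤ δ ∧ δ < diam (S.Jmap u.dropLast)}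

/-- `A(F) = {u ∈ M(|F|) : J_u ∩ F ≠ ∅}`. -/
def AF (S : MoranStructure X d) (F : Set X) : Set (List ℕ) :=
  {u : List ℕ | u ∈ S.cutM (diam F) ∧ (S.Jmap u ∩ F).Nonempty}

/-- `D(F,k) = {u ∈ A(F) : |u| = k}`. -/
def DF (S : MoranStructure X d) (F : Set X) (k : ℕ) : Set (List ℕ) :=
  {u ∈ S.AF F | u.length = k}

end MoranStructure

/-- There is a (countable) cover `{U_i}` of `E` with
`δ^{1/θ} ≤ |U_i| ≤ δ` for all `i` and `∑_i |U_i|^s ≤ ε`. -/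
def CoverExists {X : Type} [MetricSpace X] (E : Set X) (θ s δ ε : ℝ) : Prop :=
  ∃ U : ℕ → Set X, E ⊆ ⋃ i, U i ∧
    (∀ i, δ ^ (1 / θ) ≤ diam (U i) ∧ diam (U i) ≤ δ) ∧
    (∑' i, ENNReal.ofReal (diam (U i) ^ s)) ≤ ENNReal.ofReal ε

/-- The upper `θ`-intermediate dimension (for `θ = 0` it is by definition
the Hausdorff dimension). -/
noncomputable def uid {X : Type} [MetricSpace X] (θ : ℝ) (E : Set X) : ℝ :=
  if θ = 0 then (dimH E).toReal
  else sInf {s : ℝ | 0 ≤ s ∧ ∀ ε, 0 < ε → ∃ Δ, 0 < Δ ∧ ∀ δ, 0 < δ → δ ≤ Δ →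
    CoverExists E θ s δ ε}

/-- The lower `θ`-intermediate dimension (for `θ = 0` it is by definition
the Hausdorff dimension). -/
noncomputable def lid {X : Type} [MetricSpace X] (θ : ℝ) (E : Set X) : ℝ :=
  if θ = 0 then (dimH E).toReal
  else sInf {s : ℝ | 0 ≤ s ∧ ∀ ε, 0 < ε → ∀ Δ, 0 < Δ → ∃ δ, 0 < δ ∧ δ ≤ Δ ∧
    CoverExists E θ s δ ε}
namespace CutAux

/-- Multiplicative weight of a word starting at position offset `m`. -/
def W (g : ℕ → ℕ → ℝ) : ℕ → List ℕ → ℝ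
  | _, [] => 1
  | m, (a :: t) => g (m + 1) a * W g (m + 1) t

lemma W_concat (g : ℕ → ℕ → ℝ) (j : ℕ) : ∀ (w : List ℕ) (m : ℕ),
    W g m (w ++ [j]) = W g m w * g (m + w.length + 1) j := by
  intro w
  induction w with
  | nil => intro m; simp [W]
  | cons a t ih =>
    intro m
    rw [show m + (a :: t).length + 1 = (m + 1) + t.length + 1 by simp; omega]
    rw [List.cons_append, W, W, ih (m + 1), mul_assoc]

lemma W_mul (f g : ℕ → ℕ → ℝ) : ∀ (u : List ℕ) (m : ℕ),
    W (fun k j => f k j * g k j) m u = W f m u * W g m u := by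
  intro u
  induction u with
  | nil => intro m; simp [W]
  | cons a t ih => intro m; simp [W, ih]; ring

lemma W_rpow (c : ℕ → ℕ → ℝ) (β : ℝ) : ∀ (u : List ℕ) (m : ℕ),
    (∀ i : Fin u.length, 0 ≤ c (m + i.1 + 1) (u.get i)) →
    (W c m u) ^ β = W (fun k j => c k j ^ β) m u := by
  intro u
  induction u with
  | nil => intro m _; simp [W, Real.one_rpow]
  | cons a t ih =>
    intro m h
    have h0 : 0 ≤ c (m + 1) a := by simpa using h ⟨0, by simp⟩
    have ht : ∀ i : Fin t.length, 0 ≤ c (m + 1 + i.1 + 1) (t.get i) := by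
      intro i
      have := h ⟨i.1 + 1, by simp [Nat.succ_lt_succ i.2]⟩
      simpa [Nat.add_assoc, Nat.add_comm, Nat.add_left_comm] using this
    have hW : 0 ≤ W c (m + 1) t := by
      clear h0 h ih
      induction t generalizing m with
      | nil => simp [W]
      | cons b s ihs =>
        have h0 : 0 ≤ c (m + 1 + 1) b := by simpa using ht ⟨0, by simp⟩
        have := ihs (m + 1) (fun i => by
          have := ht ⟨i.1 + 1, by simp [Nat.succ_lt_succ i.2]⟩
          simpa [Nat.add_assoc, Nat.add_comm, Nat.add_left_comm] using this)
        exact mul_nonneg h0 this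
    rw [W, Real.mul_rpow h0 hW, ih (m + 1) ht, W]

lemma W_pos (c : ℕ → ℕ → ℝ) : ∀ (u : List ℕ) (m : ℕ),
    (∀ i : Fin u.length, 0 < c (m + i.1 + 1) (u.get i)) → 0 < W c m u := by
  intro u
  induction u with
  | nil => intro m _; simp [W]
  | cons a t ih =>
    intro m h
    have h0 : 0 < c (m + 1) a := by simpa using h ⟨0, by simp⟩
    refine mul_pos h0 (ih (m+1) fun i => ?_)
    have := h ⟨i.1 + 1, by simp [Nat.succ_lt_succ i.2]⟩
    simpa [Nat.add_assoc, Nat.add_comm, Nat.add_left_comm] using this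

lemma W_const (h : ℕ → ℝ) : ∀ (u : List ℕ) (m : ℕ),
    W (fun k _ => h k) m u = ∏ i ∈ Finset.range u.length, h (m + i + 1) := by
  intro u
  induction u with
  | nil => intro m; simp [W]
  | cons a t ih =>
    intro m
    simp only [W, ih, List.length_cons]
    rw [Finset.prod_range_succ' (fun i => h (m + i + 1))]
    have : ∀ i, h (m + (i + 1) + 1) = h (m + 1 + i + 1) := by intro i; ring_nf
    simp only [this]
    ring

lemma W_congr (f f' : ℕ → ℕ → ℝ) : ∀ (u : List ℕ) (m : ℕ),
    (∀ i : Fin u.length, f (m + i.1 + 1) (u.get i) = f' (m + i.1 + 1) (u.get i)) →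
    W f m u = W f' m u := by
  intro u
  induction u with
  | nil => intro m _; rfl
  | cons a t ih =>
    intro m h
    have h0 : f (m + 1) a = f' (m + 1) a := by simpa using h ⟨0, by simp⟩
    have ht : ∀ i : Fin t.length, f (m + 1 + i.1 + 1) (t.get i) = f' (m + 1 + i.1 + 1) (t.get i) := by
      intro i
      have := h ⟨i.1 + 1, by simp [Nat.succ_lt_succ i.2]⟩
      simpa [Nat.add_assoc, Nat.add_comm, Nat.add_left_comm] using this
    rw [W, W, h0, ih (m + 1) ht]

lemma range_to_Icc (h : ℕ → ℝ) (k : ℕ) :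
    ∏ i ∈ Finset.range k, h (i + 1) = ∏ i ∈ Finset.Icc 1 k, h i := by
  induction k with
  | zero => simp
  | succ k ih =>
    rw [Finset.prod_range_succ, ih, Finset.prod_Icc_succ_top (by omega)]

end CutAux

namespace CutAux

variable {n : ℕ → ℕ}

lemma isWord_append_left {u t : List ℕ} (h : IsWord n (u ++ t)) : IsWord n u := by
  intro i
  have hi : i.1 < (u ++ t).length := by have h2 := i.2; simp only [List.length_append]; omega
  have := h ⟨i.1, hi⟩
  simpa [List.get_eq_getElem, List.getElem_append_left i.2] using this

lemma isWord_concat {w : List ℕ} {j : ℕ} (hw : IsWord n w)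
    (h1 : 1 ≤ j) (h2 : j ≤ n (w.length + 1)) : IsWord n (w ++ [j]) := by
  intro i
  rcases Nat.lt_or_ge i.1 w.length with hlt | hge
  · have := hw ⟨i.1, hlt⟩
    simpa [List.get_eq_getElem, List.getElem_append_left hlt] using this
  · have hieq : i.1 = w.length := by have := i.2; simp at this; omega
    simp only [List.get_eq_getElem, List.getElem_concat_length (l := w) (a := j) (i := i.1) hieq]
    rw [hieq]; exact ⟨h1, h2⟩

/-- Canonical extension of a finite word to an infinite word. -/
def extW (u : List ℕ) : ℕ → ℕ := fun k => u.getD (k - 1) 1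

lemma extW_isInf (hn1 : ∀ k, 1 ≤ k → 1 ≤ n k) {u : List ℕ} (hu : IsWord n u) :
    IsInfWord n (extW u) := by
  intro k hk
  unfold extW
  rcases Nat.lt_or_ge (k - 1) u.length with hlt | hge
  · have := hu ⟨k - 1, hlt⟩
    rw [List.getD_eq_getElem u 1 hlt]
    simpa [Nat.sub_add_cancel hk] using this
  · rw [List.getD_eq_default u 1 hge]
    exact ⟨le_refl 1, hn1 k hk⟩

lemma extW_mem (hn1 : ∀ k, 1 ≤ k → 1 ≤ n k) {u : List ℕ} (hu : IsWord n u) :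
    extW u ∈ Cylinder n u := by
  refine ⟨extW_isInf hn1 hu, fun i => ?_⟩
  unfold extW
  simp only [Nat.add_sub_cancel]
  exact List.getD_eq_getElem u 1 i.2

lemma cylinder_mono {w t : List ℕ} : Cylinder n (w ++ t) ⊆ Cylinder n w := by
  rintro v ⟨hv, hpre⟩
  refine ⟨hv, fun i => ?_⟩
  have hi : i.1 < (w ++ t).length := by simp; omega
  have := hpre ⟨i.1, hi⟩
  simpa [List.get_eq_getElem, List.getElem_append_left i.2] using this

lemma mem_cylinder_concat {w : List ℕ} {v : ℕ → ℕ} (hv : v ∈ Cylinder n w) :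
    v ∈ Cylinder n (w ++ [v (w.length + 1)]) := by
  refine ⟨hv.1, fun i => ?_⟩
  rcases Nat.lt_or_ge i.1 w.length with hlt | hge
  · have := hv.2 ⟨i.1, hlt⟩
    simpa [List.get_eq_getElem, List.getElem_append_left hlt] using this
  · have hieq : i.1 = w.length := by have := i.2; simp at this; omega
    simp only [List.get_eq_getElem, hieq]
    exact (List.getElem_concat_length (l := w) (i := w.length) rfl (by simp)).symm

lemma cyl_eq_of_prefix {z u : List ℕ} (hlen : z.length ≤ u.length)
    (hpre : ∀ i : Fin z.length, z.get i = u.get ⟨i.1, lt_of_lt_of_le i.2 hlen⟩) :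
    Cylinder n u ⊆ Cylinder n z := by
  rintro v ⟨hv, hu⟩
  refine ⟨hv, fun i => ?_⟩
  rw [hpre i]
  exact hu ⟨i.1, lt_of_lt_of_le i.2 hlen⟩

end CutAux

namespace CutAux

lemma cutset_sum (n : ℕ → ℕ) (hn1 : ∀ k, 1 ≤ k → 1 ≤ n k)
    (g : ℕ → ℕ → ℝ) (hg : ∀ k, 1 ≤ k → ∑ j ∈ Finset.Icc 1 (n k), g k j = 1) :
    ∀ (N : ℕ) (A : Finset (List ℕ)), IsCutSet n ↑A → (∑ u ∈ A, u.length) = N →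
    ∑ u ∈ A, W g 0 u = 1 := by
  intro N
  induction N using Nat.strong_induction_on with
  | _ N IH =>
  intro A hA hN
  obtain ⟨hvalid, hdisj, hcover⟩ := hA
  -- A is nonempty
  have hinf1 : IsInfWord n (fun _ => 1) := fun k hk => ⟨le_refl 1, hn1 k hk⟩
  obtain ⟨u0, hu0⟩ : ∃ u0 ∈ A, (fun _ => 1) ∈ Cylinder n u0 := by
    have := hcover hinf1
    simpa using this
  have hAne : A.Nonempty := ⟨u0, hu0.1⟩
  obtain ⟨u, huA, hmax⟩ := A.exists_max_image (fun z => z.length) hAne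
  by_cases hu : u = []
  · -- all words are [], A = {[]}
    have : A = {([] : List ℕ)} := by
      have hsub : A ⊆ {([] : List ℕ)} := by
        intro z hz
        have := hmax z hz
        rw [hu] at this
        simp only [List.length_nil, Nat.le_zero, List.length_eq_zero_iff] at this
        simp [this]
      rcases Finset.subset_singleton_iff.mp hsub with h | h
      · exact absurd h (Finset.nonempty_iff_ne_empty.mp hAne)
      · exact h
    rw [this]; simp [W]
  · -- u = w ++ [j]
    set w := u.dropLast with hw
    set j := u.getLast hu with hj
    have hwj : w ++ [j] = u := List.dropLast_append_getLast hu
    have hlen : u.length = w.length + 1 := by rw [← hwj]; simp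
    set m := w.length + 1 with hm
    have hm1 : 1 ≤ m := by omega
    have huval : IsWord n u := hvalid u huA
    have hwval : IsWord n w := by rw [← hwj] at huval; exact isWord_append_left huval
    -- siblings
    classical
    set sib : Finset (List ℕ) := (Finset.Icc 1 (n m)).image (fun j' => w ++ [j']) with hsib
    have hsibval : ∀ j' ∈ Finset.Icc 1 (n m), IsWord n (w ++ [j']) := by
      intro j' hj'
      rw [Finset.mem_Icc] at hj'
      exact isWord_concat hwval hj'.1 hj'.2
    have hsibA : sib ⊆ A := by
      intro z hz
      rw [hsib, Finset.mem_image] at hz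
      obtain ⟨j', hj', rfl⟩ := hz
      have hzval := hsibval j' hj'
      have hv' : extW (w ++ [j']) ∈ Cylinder n (w ++ [j']) := extW_mem hn1 hzval
      obtain ⟨z', hz'A, hvz'⟩ : ∃ z' ∈ A, extW (w ++ [j']) ∈ Cylinder n z' := by
        have := hcover (extW_isInf hn1 hzval)
        simpa using this
      have hz'len : z'.length ≤ m := by
        have := hmax z' hz'A; omega
      rcases Nat.lt_or_ge z'.length m with hlt | hge
      · -- z' is a proper prefix of u: contradiction
        exfalso
        have hz'w : z'.length ≤ w.length := by omega
        have hulen : z'.length ≤ u.length := by omega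
        have hpre : ∀ i : Fin z'.length, z'.get i = u.get ⟨i.1, lt_of_lt_of_le i.2 hulen⟩ := by
          intro i
          have hiw : i.1 < w.length := lt_of_lt_of_le i.2 hz'w
          have h1 : extW (w ++ [j']) (i.1 + 1) = z'.get i := hvz'.2 i
          have h2 : extW (w ++ [j']) (i.1 + 1)
              = (w ++ [j']).get ⟨i.1, by simp only [List.length_append, List.length_singleton]; omega⟩ :=
            hv'.2 ⟨i.1, by simp only [List.length_append, List.length_singleton]; omega⟩
          have h3 : (w ++ [j']).get ⟨i.1, by simp only [List.length_append, List.length_singleton]; omega⟩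
              = w.get ⟨i.1, hiw⟩ := by
            simp only [List.get_eq_getElem]
            exact List.getElem_append_left hiw
          have h4 : u.get ⟨i.1, lt_of_lt_of_le i.2 hulen⟩ = w.get ⟨i.1, hiw⟩ := by
            simp only [List.get_eq_getElem]
            have := List.getElem_append_left (as := w) (bs := [j]) hiw
              (h' := by simp only [List.length_append, List.length_singleton]; omega)
            rw [← this]
            exact List.getElem_of_eq hwj.symm _
          rw [h4, ← h3, ← h2, h1]
        have hsubcyl : Cylinder n u ⊆ Cylinder n z' := cyl_eq_of_prefix hulen hpre
        have hmemu : extW u ∈ Cylinder n u := extW_mem hn1 huval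
        have hne' : z' ≠ u := by intro h; rw [h] at hlt; omega
        have hE : Cylinder n z' ∩ Cylinder n u = ∅ := hdisj hz'A huA hne'
        rw [Set.eq_empty_iff_forall_notMem] at hE
        exact hE (extW u) ⟨hsubcyl hmemu, hmemu⟩
      · -- z'.length = m, so z' = w ++ [j']
        have hzeq : z' = w ++ [j'] := by
          have hlz : z'.length = (w ++ [j']).length := by
            simp only [List.length_append, List.length_singleton]; omega
          apply List.ext_get hlz
          intro i h1 h2
          have e1 : extW (w ++ [j']) (i + 1) = z'.get ⟨i, h1⟩ := hvz'.2 ⟨i, h1⟩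
          have e2 : extW (w ++ [j']) (i + 1) = (w ++ [j']).get ⟨i, h2⟩ := hv'.2 ⟨i, h2⟩
          rw [← e1, ← e2]
        rw [← hzeq]; exact hz'A
    -- w ∉ A
    have hwA : w ∉ A := by
      intro hwinA
      have hne' : w ≠ u := by intro h; rw [← h] at hlen; omega
      have hmemu : extW u ∈ Cylinder n u := extW_mem hn1 huval
      have hmemw : extW u ∈ Cylinder n w := by
        have h' : extW u ∈ Cylinder n (w ++ [j]) := by rw [hwj]; exact hmemu
        exact cylinder_mono h'
      have hE : Cylinder n w ∩ Cylinder n u = ∅ := hdisj hwinA huA hne'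
      rw [Set.eq_empty_iff_forall_notMem] at hE
      exact hE (extW u) ⟨hmemw, hmemu⟩
    -- the new cut set
    set A' : Finset (List ℕ) := insert w (A \ sib) with hA'
    -- key disjointness: Cylinder w disjoint from Cylinder z for z ∈ A \ sib
    have hkey : ∀ z ∈ A, z ∉ sib → Cylinder n w ∩ Cylinder n z = ∅ := by
      intro z hzA hzsib
      rw [Set.eq_empty_iff_forall_notMem]
      rintro v ⟨hvw, hvz⟩
      set j0 := v m with hj0
      have hj0mem : j0 ∈ Finset.Icc 1 (n m) := by
        rw [Finset.mem_Icc]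
        exact hvw.1 m hm1
      have hsibmem : w ++ [j0] ∈ sib := by
        rw [hsib, Finset.mem_image]; exact ⟨j0, hj0mem, rfl⟩
      have hv0 : v ∈ Cylinder n (w ++ [j0]) := mem_cylinder_concat hvw
      have hne' : w ++ [j0] ≠ z := by intro h; rw [h] at hsibmem; exact hzsib hsibmem
      have hE : Cylinder n (w ++ [j0]) ∩ Cylinder n z = ∅ := hdisj (hsibA hsibmem) hzA hne'
      rw [Set.eq_empty_iff_forall_notMem] at hE
      exact hE v ⟨hv0, hvz⟩
    have hA'cut : IsCutSet n ↑A' := by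
      refine ⟨?_, ?_, ?_⟩
      · intro z hz
        rw [hA'] at hz
        simp only [Finset.coe_insert, Set.mem_insert_iff, Finset.mem_coe,
          Finset.mem_sdiff] at hz
        rcases hz with rfl | ⟨hz, _⟩
        · exact hwval
        · exact hvalid z hz
      · intro x hx y hy hxy
        simp only [hA', Finset.coe_insert, Set.mem_insert_iff, Finset.mem_coe,
          Finset.mem_sdiff] at hx hy
        rcases hx with rfl | ⟨hxA, hxs⟩
        · rcases hy with rfl | ⟨hyA, hys⟩
          · exact absurd rfl hxy
          · exact hkey y hyA hys
        · rcases hy with rfl | ⟨hyA, hys⟩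
          · rw [Set.inter_comm]; exact hkey x hxA hxs
          · exact hdisj hxA hyA hxy
      · intro v hv
        obtain ⟨z, hzA, hvz⟩ : ∃ z ∈ A, v ∈ Cylinder n z := by
          have := hcover hv; simpa using this
        by_cases hzs : z ∈ sib
        · rw [hsib, Finset.mem_image] at hzs
          obtain ⟨j', _, rfl⟩ := hzs
          have : v ∈ Cylinder n w := cylinder_mono hvz
          simp only [Set.mem_iUnion]
          exact ⟨w, by simp [hA'], this⟩
        · simp only [Set.mem_iUnion]
          exact ⟨z, by simp [hA', hzA, hzs], hvz⟩
    -- sum over siblings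
    have hinj : Function.Injective (fun j' => w ++ [j']) := by
      intro a b hab
      simpa using hab
    have hsibsum : ∑ z ∈ sib, W g 0 z = W g 0 w := by
      rw [hsib, Finset.sum_image (fun a _ b _ hab => hinj hab)]
      have : ∀ j' ∈ Finset.Icc 1 (n m), W g 0 (w ++ [j']) = W g 0 w * g m j' := by
        intro j' _
        rw [W_concat]
        congr 2
        omega
      rw [Finset.sum_congr rfl this, ← Finset.mul_sum, hg m hm1, mul_one]
    have hwns : w ∉ A \ sib := fun h => hwA (Finset.mem_sdiff.mp h).1
    have hsumA' : ∑ z ∈ A', W g 0 z = ∑ z ∈ A, W g 0 z := by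
      rw [hA', Finset.sum_insert hwns, ← hsibsum, ← Finset.sum_sdiff hsibA]
      ring
    have hlenA' : ∑ z ∈ A', z.length < N := by
      have h1 : ∑ z ∈ A', z.length = w.length + ∑ z ∈ A \ sib, z.length := by
        rw [hA', Finset.sum_insert hwns]
      have h2 : ∑ z ∈ A \ sib, z.length + ∑ z ∈ sib, z.length = N := by
        rw [Finset.sum_sdiff hsibA, hN]
      have h3 : ∑ z ∈ sib, z.length = (n m) * m := by
        rw [hsib, Finset.sum_image (fun a _ b _ hab => hinj hab)]
        have : ∀ j' ∈ Finset.Icc 1 (n m), (w ++ [j']).length = m := by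
          intro j' _; simp [hm]
        rw [Finset.sum_congr rfl this, Finset.sum_const, Nat.card_Icc]
        simp [smul_eq_mul]
      have hnm := hn1 m hm1
      have : 1 * m ≤ (n m) * m := Nat.mul_le_mul_right m hnm
      omega
    have := IH _ hlenA' A' hA'cut rfl
    rw [← hsumA', this]

end CutAux


/-- **Lemma 2.3.** For a Moran set with `|J| = 1`, a finite cut set `M` of nonempty
words with minimal word length `L_M` and maximal word length `K_M`, and any real
`β < min_{L_M ≤ k ≤ K_M} s_k`, one has `∑_{u∈M} |J_u|^β > 1`, where `s_k` is the
unique solution of `∏_{i=1}^k (∑_{j=1}^{n_i} c_{i,j}^s) = 1`. -/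
theorem cut_set_sum_gt_one {d : ℕ} (hd : 1 ≤ d)
    (S : MoranStructure (EuclideanSpace ℝ (Fin d)) d)
    (hJdiam : Metric.diam S.J = 1)
    (sk : ℕ → ℝ)
    (hsk : ∀ k, 1 ≤ k →
      (∏ i ∈ Finset.Icc 1 k, ∑ j ∈ Finset.Icc 1 (S.n i), S.c i j ^ sk k) = 1)
    (A : Finset (List ℕ)) (hA : IsCutSet S.n ↑A)
    (hne : ∀ u ∈ A, u ≠ ([] : List ℕ))
    (LM KM : ℕ)
    (hLM : ∃ u ∈ A, u.length = LM) (hKM : ∃ u ∈ A, u.length = KM)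
    (hbound : ∀ u ∈ A, LM ≤ u.length ∧ u.length ≤ KM)
    (β : ℝ) (hβ : ∀ k, LM ≤ k → k ≤ KM → β < sk k) :
    1 < ∑ u ∈ A, Metric.diam (S.Jmap u) ^ β := by
  classical
  set n := S.n with hn_def
  set c := S.c with hc_def
  have hn1 : ∀ k, 1 ≤ k → 1 ≤ n k := fun k hk => le_trans (by norm_num) (S.hn k hk)
  have hIccN : ∀ k, 1 ≤ k → (Finset.Icc 1 (n k)).Nonempty := fun k hk =>
    ⟨1, Finset.mem_Icc.mpr ⟨le_refl 1, hn1 k hk⟩⟩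
  set σ : ℕ → ℝ := fun k => ∑ j ∈ Finset.Icc 1 (n k), c k j ^ β with hσ_def
  have hσpos : ∀ k, 1 ≤ k → 0 < σ k := by
    intro k hk
    refine Finset.sum_pos (fun j hj => ?_) (hIccN k hk)
    rw [Finset.mem_Icc] at hj
    exact Real.rpow_pos_of_pos (S.hc_pos k j hk hj.1 hj.2) β
  set g : ℕ → ℕ → ℝ := fun k j => c k j ^ β / σ k with hg_def
  have hg : ∀ k, 1 ≤ k → ∑ j ∈ Finset.Icc 1 (n k), g k j = 1 := by
    intro k hk
    rw [hg_def]
    rw [← Finset.sum_div]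
    exact div_self (ne_of_gt (hσpos k hk))
  -- sum of weights over the cut set is 1
  have hWsum : ∑ u ∈ A, CutAux.W g 0 u = 1 :=
    CutAux.cutset_sum n hn1 g hg _ A hA rfl
  obtain ⟨hvalid, _, _⟩ := hA
  -- diameter formula
  have hdiam : ∀ u : List ℕ, IsWord n u → Metric.diam (S.Jmap u) = CutAux.W c 0 u := by
    intro u
    induction u using List.reverseRecOn with
    | nil => intro _; rw [S.hJ_nil, hJdiam]; rfl
    | append_singleton w j ih =>
      intro hu
      have hw : IsWord n w := CutAux.isWord_append_left hu
      rw [S.hJ_ratio w j hu, CutAux.W_concat, ih hw, Nat.zero_add]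
      ring
  -- c < 1 everywhere relevant
  have hclt1 : ∀ i j, 1 ≤ i → 1 ≤ j → j ≤ n i → c i j < 1 := by
    intro i j hi hj1 hj2
    have h2 : 2 ≤ n i := S.hn i hi
    set j1 : ℕ := if j = 1 then 2 else 1 with hj1def
    have hj1mem : j1 ∈ Finset.Icc 1 (n i) := by
      rw [Finset.mem_Icc, hj1def]
      split <;> omega
    have hj1ne : j1 ≠ j := by rw [hj1def]; split <;> omega
    have hjmem : j ∈ Finset.Icc 1 (n i) := Finset.mem_Icc.mpr ⟨hj1, hj2⟩
    have hlt : c i j ^ (d : ℝ) < ∑ j' ∈ Finset.Icc 1 (n i), c i j' ^ (d : ℝ) := by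
      refine Finset.single_lt_sum (f := fun j' => c i j' ^ (d : ℝ)) hj1ne hjmem hj1mem ?_ ?_
      · refine Real.rpow_pos_of_pos ?_ _
        rw [Finset.mem_Icc] at hj1mem
        exact S.hc_pos i j1 hi hj1mem.1 hj1mem.2
      · intro k hk _
        rw [Finset.mem_Icc] at hk
        exact le_of_lt (Real.rpow_pos_of_pos (S.hc_pos i k hi hk.1 hk.2) _)
    have hle1 : c i j ^ (d : ℝ) < 1 := lt_of_lt_of_le hlt (S.hc_sum i hi)
    by_contra hge
    push_neg at hge
    have : (1 : ℝ) ≤ c i j ^ (d : ℝ) := Real.one_le_rpow hge (by positivity)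
    linarith
  -- products P_k > 1
  have hP : ∀ k, 1 ≤ k → LM ≤ k → k ≤ KM → 1 < ∏ i ∈ Finset.Icc 1 k, σ i := by
    intro k hk hLk hkK
    have hβk := hβ k hLk hkK
    calc (1 : ℝ) = ∏ i ∈ Finset.Icc 1 k, ∑ j ∈ Finset.Icc 1 (n i), c i j ^ sk k :=
          (hsk k hk).symm
      _ < ∏ i ∈ Finset.Icc 1 k, σ i := by
          refine Finset.prod_lt_prod_of_nonempty ?_ ?_ ⟨1, Finset.mem_Icc.mpr ⟨le_refl 1, hk⟩⟩
          · intro i hi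
            rw [Finset.mem_Icc] at hi
            refine Finset.sum_pos (fun j hj => ?_) (hIccN i hi.1)
            rw [Finset.mem_Icc] at hj
            exact Real.rpow_pos_of_pos (S.hc_pos i j hi.1 hj.1 hj.2) _
          · intro i hi
            rw [Finset.mem_Icc] at hi
            refine Finset.sum_lt_sum_of_nonempty (hIccN i hi.1) ?_
            intro j hj
            rw [Finset.mem_Icc] at hj
            exact Real.rpow_lt_rpow_of_exponent_gt (S.hc_pos i j hi.1 hj.1 hj.2)
              (hclt1 i j hi.1 hj.1 hj.2) hβk
  -- rewrite each summand
  have hterm : ∀ u ∈ A, Metric.diam (S.Jmap u) ^ β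
      = CutAux.W g 0 u * ∏ i ∈ Finset.Icc 1 u.length, σ i := by
    intro u huA
    have huval : IsWord n u := hvalid u huA
    have hnn : ∀ i : Fin u.length, 0 ≤ c (0 + i.1 + 1) (u.get i) := by
      intro i
      have := huval i
      exact le_of_lt (S.hc_pos (0 + i.1 + 1) (u.get i) (by omega)
        (by simpa [Nat.zero_add] using this.1) (by simpa [Nat.zero_add] using this.2))
    rw [hdiam u huval, CutAux.W_rpow c β u 0 hnn]
    have hcongr : CutAux.W (fun k j => c k j ^ β) 0 u
        = CutAux.W (fun k j => g k j * σ k) 0 u := by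
      refine CutAux.W_congr _ _ u 0 (fun i => ?_)
      show c _ _ ^ β = c _ _ ^ β / σ _ * σ _
      rw [div_mul_cancel₀ _ (ne_of_gt (hσpos (0 + i.1 + 1) (by omega)))]
    rw [hcongr, CutAux.W_mul, CutAux.W_const]
    congr 1
    have : ∀ i ∈ Finset.range u.length, σ (0 + i + 1) = σ (i + 1) := by
      intro i _; rw [Nat.zero_add]
    rw [Finset.prod_congr rfl this, CutAux.range_to_Icc]
  -- positivity of the weights
  have hWpos : ∀ u ∈ A, 0 < CutAux.W g 0 u := by
    intro u huA
    have huval : IsWord n u := hvalid u huA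
    refine CutAux.W_pos g u 0 (fun i => ?_)
    have := huval i
    have h1 : 1 ≤ 0 + i.1 + 1 := by omega
    refine div_pos (Real.rpow_pos_of_pos (S.hc_pos _ _ h1
      (by simpa [Nat.zero_add] using this.1) (by simpa [Nat.zero_add] using this.2)) _)
      (hσpos _ h1)
  have hAne : A.Nonempty := by
    obtain ⟨u, hu, _⟩ := hLM
    exact ⟨u, hu⟩
  calc (1 : ℝ) = ∑ u ∈ A, CutAux.W g 0 u := hWsum.symm
    _ < ∑ u ∈ A, Metric.diam (S.Jmap u) ^ β := by
        refine Finset.sum_lt_sum_of_nonempty hAne (fun u huA => ?_)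
        rw [hterm u huA]
        have hb := hbound u huA
        have hu1 : 1 ≤ u.length := by
          have := hne u huA
          cases u with
          | nil => exact absurd rfl this
          | cons a t => simp
        exact (lt_mul_iff_one_lt_right (hWpos u huA)).mpr
          (hP u.length hu1 hb.1 hb.2)
end
end

section
/- Let E ⊂ ℝ^d be a Moran set with c_* = 0 such that lim_{k→∞} (log c̲_k)/(log M_k) = 0, where c̲_k = min_{1≤j≤n_k} c_{k,j} and M_k = max_{u∈Σ^k} |J_u|. Then there exists a constant C > 0 (one may take C = 2^d·𝓛^d(B(0,1))/𝓛^d(int J)) such that for every F ⊂ ℝ^d with E ∩ F ≠ ∅ and 0 < |F| < |J|, Σ_{k≥k_0} c̲_k^d · #D(F,k) ≤ C, where k_0 = min{|u| : u ∈ A(F)} and D(F,k) = {u ∈ A(F) : |u| = k}. -/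
open Metric Set Filter Topology

noncomputable section

/-- Any isometry of a finite-dimensional Euclidean space into itself is surjective. -/
lemma aux_isometry_surjective {d : ℕ} {g : EuclideanSpace ℝ (Fin d) → EuclideanSpace ℝ (Fin d)}
    (hg : Isometry g) : Function.Surjective g := by
  set h : EuclideanSpace ℝ (Fin d) → EuclideanSpace ℝ (Fin d) := fun x => g x - g 0 with hh
  have hdist : ∀ x y, dist (h x) (h y) = dist x y := by
    intro x y; simp only [hh]; rw [dist_sub_right]; exact hg.dist_eq x y
  have h0 : h 0 = 0 := sub_self _
  have hnorm : ∀ x, ‖h x‖ = ‖x‖ := by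
    intro x
    calc ‖h x‖ = dist (h x) (h 0) := by rw [h0, dist_zero_right]
    _ = dist x 0 := hdist x 0
    _ = ‖x‖ := dist_zero_right x
  have hsub : ∀ x y, ‖h x - h y‖ = ‖x - y‖ := by
    intro x y; rw [← dist_eq_norm, ← dist_eq_norm]; exact hdist x y
  have hinner : ∀ x y, inner ℝ (h x) (h y) = inner ℝ x y := by
    intro x y
    rw [real_inner_eq_norm_mul_self_add_norm_mul_self_sub_norm_sub_mul_self_div_two,
      real_inner_eq_norm_mul_self_add_norm_mul_self_sub_norm_sub_mul_self_div_two (x := x),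
      hnorm, hnorm, hsub]
  have key : ∀ x y : EuclideanSpace ℝ (Fin d), inner ℝ (h x) y = inner ℝ (h x) y → True := fun _ _ _ => trivial
  have hadd : ∀ x y, h (x + y) = h x + h y := by
    intro x y
    have e : inner ℝ (h (x + y) - (h x + h y)) (h (x + y) - (h x + h y)) = 0 := by
      simp only [inner_sub_left, inner_sub_right, inner_add_left, inner_add_right, hinner]
      rw [real_inner_comm y x]
      ring
    rw [inner_self_eq_zero, sub_eq_zero] at e
    exact e
  have hsmul : ∀ (c : ℝ) (x), h (c • x) = c • h x := by
    intro c x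
    have e : inner ℝ (h (c • x) - c • h x) (h (c • x) - c • h x) = 0 := by
      simp only [inner_sub_left, inner_sub_right, real_inner_smul_left, real_inner_smul_right,
        hinner]
      ring
    rw [inner_self_eq_zero, sub_eq_zero] at e
    exact e
  let L : EuclideanSpace ℝ (Fin d) →ₗ[ℝ] EuclideanSpace ℝ (Fin d) :=
    { toFun := h, map_add' := hadd, map_smul' := hsmul }
  let li : EuclideanSpace ℝ (Fin d) →ₗᵢ[ℝ] EuclideanSpace ℝ (Fin d) := ⟨L, hnorm⟩
  have hs : Function.Surjective h := by
    intro y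
    obtain ⟨x, hx⟩ := (li.toLinearIsometryEquiv rfl).surjective y
    rw [LinearIsometry.toLinearIsometryEquiv_apply] at hx
    exact ⟨x, hx⟩
  intro y
  obtain ⟨x, hx⟩ := hs (y - g 0)
  refine ⟨x, ?_⟩
  have : g x - g 0 = y - g 0 := hx
  exact sub_left_injective this

/-- diameter of image under a similarity. -/
lemma aux_diam_sim {X : Type} [MetricSpace X] {f : X → X} {r : ℝ} (hr : 0 < r)
    (hf : ∀ x y, dist (f x) (f y) = r * dist x y) {s : Set X} (hs : Bornology.IsBounded s) :
    diam (f '' s) = r * diam s := by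
  have hlip : LipschitzWith ⟨r, hr.le⟩ f :=
    LipschitzWith.of_dist_le_mul (fun x y => (hf x y).le)
  have hbim : Bornology.IsBounded (f '' s) := hlip.isBounded_image hs
  apply le_antisymm
  · apply diam_le_of_forall_dist_le (mul_nonneg hr.le diam_nonneg)
    rintro x ⟨a, ha, rfl⟩ y ⟨b, hb, rfl⟩
    rw [hf]
    exact mul_le_mul_of_nonneg_left (dist_le_diam_of_mem hs ha hb) hr.le
  · rw [mul_comm, ← le_div_iff₀ hr]
    apply diam_le_of_forall_dist_le (div_nonneg diam_nonneg hr.le)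
    intro x hx y hy
    rw [le_div_iff₀ hr, mul_comm, ← hf]
    exact dist_le_diam_of_mem hbim (mem_image_of_mem f hx) (mem_image_of_mem f hy)

lemma aux_isWord_take {n : ℕ → ℕ} {u : List ℕ} (h : IsWord n u) (m : ℕ) :
    IsWord n (u.take m) := by
  intro i
  have hi : (i : ℕ) < u.length := lt_of_lt_of_le i.2 (by simp [List.length_take])
  have : (u.take m).get i = u.get ⟨i, hi⟩ := by
    simp [List.get_eq_getElem, List.getElem_take]
  rw [this]
  exact h ⟨i, hi⟩

lemma aux_isWord_prefix {n : ℕ → ℕ} {u w : List ℕ} (h : IsWord n w) (hp : u <+: w) :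
    IsWord n u := by
  rw [List.prefix_iff_eq_take] at hp
  rw [hp]
  exact aux_isWord_take h _

lemma aux_split {u w : List ℕ} (h1 : ¬ u <+: w) (h2 : ¬ w <+: u) :
    ∃ (p : List ℕ) (a b : ℕ) (t s : List ℕ), a ≠ b ∧ u = p ++ a :: t ∧ w = p ++ b :: s := by
  induction u generalizing w with
  | nil => exact absurd (List.nil_prefix) h1
  | cons x u' ih =>
    cases w with
    | nil => exact absurd (List.nil_prefix) h2
    | cons y w' =>
      by_cases hxy : x = y
      · subst hxy
        have h1' : ¬ u' <+: w' := fun h => h1 (by simpa [List.cons_prefix_cons] using h)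
        have h2' : ¬ w' <+: u' := fun h => h2 (by simpa [List.cons_prefix_cons] using h)
        obtain ⟨p, a, b, t, s, hab, hu, hw⟩ := ih h1' h2'
        exact ⟨x :: p, a, b, t, s, hab, by simp [hu], by simp [hw]⟩
      · exact ⟨[], x, y, u', w', hxy, rfl, rfl⟩


lemma aux_Jmap_bounded {X : Type} [MetricSpace X] {d : ℕ} (S : MoranStructure X d)
    {u : List ℕ} (hu : IsWord S.n u) : Bornology.IsBounded (S.Jmap u) := by
  obtain ⟨r, hr, f, hf, him⟩ := S.hJ_sim u hu
  have hlip : LipschitzWith ⟨r, hr.le⟩ f :=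
    LipschitzWith.of_dist_le_mul (fun x y => (hf x y).le)
  rw [him]
  exact hlip.isBounded_image S.hJ_compact.isBounded

lemma aux_Jmap_anti {X : Type} [MetricSpace X] {d : ℕ} (S : MoranStructure X d)
    {u w : List ℕ} (hw : IsWord S.n w) (h : u <+: w) : S.Jmap w ⊆ S.Jmap u := by
  induction w using List.reverseRecOn with
  | nil => rw [List.prefix_nil.mp h]
  | append_singleton w a ih =>
    by_cases hu : u = w ++ [a]
    · rw [hu]
    · have hlen : u.length ≤ w.length := by
        have h1 := h.length_le
        simp only [List.length_append, List.length_singleton] at h1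
        rcases Nat.lt_or_ge u.length (w.length + 1) with h2 | h2
        · omega
        · exact absurd (h.eq_of_length (by simp; omega)) hu
      have hpre : u <+: w := by
        have := List.prefix_iff_eq_take.mp h
        rw [List.take_append_of_le_length hlen] at this
        rw [this]
        exact List.take_prefix _ _
      have hww : IsWord S.n w := aux_isWord_prefix hw (List.prefix_append w [a])
      exact (S.hJ_sub w a hw).trans (ih hww hpre)

lemma aux_cutM_eq_of_prefix {X : Type} [MetricSpace X] {d : ℕ} (S : MoranStructure X d)
    {δ : ℝ} {u w : List ℕ} (hu : u ∈ S.cutM δ) (hw : w ∈ S.cutM δ) (h : u <+: w) : u = w := by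
  by_contra hne
  have hlt : u.length < w.length :=
    lt_of_le_of_ne h.length_le (fun he => hne (h.eq_of_length he))
  have hpre : u <+: w.dropLast := by
    have h1 := List.prefix_iff_eq_take.mp h
    have h2 : u = w.dropLast.take u.length := by
      rw [List.dropLast_eq_take, List.take_take, min_eq_left (by omega)]
      exact h1
    rw [h2]
    exact List.take_prefix _ _
  have hwdrop : IsWord S.n w.dropLast := by
    refine aux_isWord_prefix hw.1 ?_
    rw [List.dropLast_eq_take]
    exact List.take_prefix _ _
  have hsub : S.Jmap w.dropLast ⊆ S.Jmap u := aux_Jmap_anti S hwdrop hpre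
  have hb : Bornology.IsBounded (S.Jmap u) := aux_Jmap_bounded S hu.1
  exact absurd ((Metric.diam_mono hsub hb).trans hu.2.1) (not_le.mpr hw.2.2)

lemma aux_interior_disjoint {X : Type} [MetricSpace X] {d : ℕ} (S : MoranStructure X d)
    {δ : ℝ} {u w : List ℕ} (hu : u ∈ S.cutM δ) (hw : w ∈ S.cutM δ) (hne : u ≠ w) :
    Disjoint (interior (S.Jmap u)) (interior (S.Jmap w)) := by
  have h1 : ¬ u <+: w := fun h => hne (aux_cutM_eq_of_prefix S hu hw h)
  have h2 : ¬ w <+: u := fun h => hne ((aux_cutM_eq_of_prefix S hw hu h).symm)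
  obtain ⟨p, a, b, t, s, hab, hut, hws⟩ := aux_split h1 h2
  have hpa : p ++ [a] <+: u := by rw [hut]; exact ⟨t, by simp⟩
  have hpb : p ++ [b] <+: w := by rw [hws]; exact ⟨s, by simp⟩
  have hwa := aux_isWord_prefix hu.1 hpa
  have hwb := aux_isWord_prefix hw.1 hpb
  have hd := S.hJ_disj p a b hwa hwb hab
  exact Set.disjoint_of_subset (interior_mono (aux_Jmap_anti S hu.1 hpa))
    (interior_mono (aux_Jmap_anti S hw.1 hpb))
    (Set.disjoint_iff_inter_eq_empty.mpr hd)

/-- **Lemma 3.1.** For a Moran set with `c_* = 0` and `lim_k log(c̲_k)/log(M_k) = 0`,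
there is a constant `C` such that for every `F` with `E ∩ F ≠ ∅` and
`0 < |F| < |J|`, one has `∑_{k ≥ k₀} c̲_k^d · #D(F,k) ≤ C`, where
`k₀ = min{|u| : u ∈ A(F)}` and `D(F,k) = {u ∈ A(F) : |u| = k}`. -/
theorem finite_intersection_cstar_zero {d : ℕ} (hd : 1 ≤ d)
    (S : MoranStructure (EuclideanSpace ℝ (Fin d)) d) (hc : S.cStar = 0)
    (hlim : Filter.Tendsto (fun k => Real.log (S.cMin k) / Real.log (S.Mk k))
      Filter.atTop (nhds 0)) :
    ∃ C : ℝ, 0 < C ∧ ∀ F : Set (EuclideanSpace ℝ (Fin d)),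
      (S.E ∩ F).Nonempty → 0 < Metric.diam F → Metric.diam F < Metric.diam S.J →
      ∀ k0 : ℕ, IsLeast {k : ℕ | ∃ u ∈ S.AF F, u.length = k} k0 →
      (∑' k : ↥(Set.Ici k0),
          ENNReal.ofReal (S.cMin ↑k ^ (d : ℝ)) * ((S.DF F ↑k).encard : ENNReal))
        ≤ ENNReal.ofReal C := by
  classical
  obtain ⟨x0, hx0⟩ := S.hJ_interior
  obtain ⟨ρ, hρ, hball⟩ := Metric.isOpen_iff.mp isOpen_interior x0 hx0
  have hballJ : ball x0 ρ ⊆ S.J := (hball.trans interior_subset)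
  haveI : Nonempty (Fin d) := ⟨⟨0, hd⟩⟩
  haveI hnt : Nontrivial (EuclideanSpace ℝ (Fin d)) :=
    ⟨⟨0, EuclideanSpace.single ⟨0, hd⟩ (1:ℝ), by
      intro he
      have h2 := congrArg (fun v : EuclideanSpace ℝ (Fin d) => v ⟨0, hd⟩) he
      simp [EuclideanSpace.single_apply] at h2⟩⟩
  have hJb : Bornology.IsBounded S.J := S.hJ_compact.isBounded
  have hDJpos : 0 < Metric.diam S.J := by
    set y := x0 + (ρ/2) • EuclideanSpace.single (⟨0, hd⟩ : Fin d) (1:ℝ) with hy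
    have hdxy : dist y x0 = ρ/2 := by
      rw [hy, dist_eq_norm, add_sub_cancel_left, norm_smul, EuclideanSpace.norm_single]
      simp [abs_of_pos (half_pos hρ), abs_of_pos hρ]
    have hyJ : y ∈ S.J := hballJ (by rw [mem_ball, hdxy]; linarith)
    have hxJ : x0 ∈ S.J := hballJ (mem_ball_self hρ)
    have := dist_le_diam_of_mem hJb hyJ hxJ
    rw [hdxy] at this; linarith
  refine ⟨(2 * Metric.diam S.J / ρ) ^ d,
    pow_pos (div_pos (by linarith) hρ) d, ?_⟩
  intro F hEF hF0 hFJ k0 hk0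
  obtain ⟨q, hqE, hqF⟩ := hEF
  have hFbdd : Bornology.IsBounded F := by
    by_contra hF
    rw [Metric.diam, Metric.ediam_of_unbounded hF] at hF0
    simp at hF0
  set m := MeasureTheory.volume (ball (0 : EuclideanSpace ℝ (Fin d)) 1) with hm
  have hm0 : m ≠ 0 := (Metric.measure_ball_pos MeasureTheory.volume _ one_pos).ne'
  have hmtop : m ≠ ⊤ := MeasureTheory.measure_ball_lt_top.ne
  have hbase : 0 < Metric.diam F * ρ / Metric.diam S.J :=
    div_pos (mul_pos hF0 hρ) hDJpos
  set K : ENNReal := ENNReal.ofReal ((Metric.diam F * ρ / Metric.diam S.J) ^ d) * m with hK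
  have key : ∀ u : ↥(S.AF F), ∃ B : Set (EuclideanSpace ℝ (Fin d)), IsOpen B ∧
      B ⊆ interior (S.Jmap u.1) ∧ B ⊆ closedBall q (2 * Metric.diam F) ∧
      ENNReal.ofReal (S.cMin u.1.length ^ d) * K ≤ MeasureTheory.volume B := by
    intro u
    obtain ⟨⟨hword, hdle, hdgt⟩, hinter⟩ := u.2
    have hne : u.1 ≠ [] := by
      intro h
      rw [h] at hdle hdgt
      exact absurd (hdgt.trans_le hdle) (lt_irrefl _)
    set k := u.1.length with hkdef
    have hk : 1 ≤ k := List.length_pos_iff.mpr hne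
    set j := u.1.getLast hne with hj
    have hsplit : u.1.dropLast ++ [j] = u.1 := List.dropLast_append_getLast hne
    have hjbound : 1 ≤ j ∧ j ≤ S.n k := by
      have hlt : k - 1 < u.1.length := by omega
      have h2 := hword ⟨k - 1, hlt⟩
      have h3 : u.1.get ⟨k - 1, hlt⟩ = j := by
        rw [hj, List.getLast_eq_getElem, List.get_eq_getElem]
      rw [h3] at h2
      have h4 : k - 1 + 1 = k := by omega
      rw [h4] at h2
      exact h2
    set T := {x : ℝ | ∃ j', 1 ≤ j' ∧ j' ≤ S.n k ∧ x = S.c k j'} with hT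
    have hTfin : T.Finite := by
      apply Set.Finite.subset ((Set.finite_Icc 1 (S.n k)).image (S.c k))
      rintro x ⟨j', h1, h2, rfl⟩
      exact ⟨j', ⟨h1, h2⟩, rfl⟩
    have hTne : T.Nonempty := ⟨S.c k j, j, hjbound.1, hjbound.2, rfl⟩
    have hcMin_pos : 0 < S.cMin k := by
      obtain ⟨j0, hj01, hj02, hje⟩ := hTne.csInf_mem hTfin
      rw [MoranStructure.cMin, hje]
      exact S.hc_pos k j0 hk hj01 hj02
    have hcMin_le : S.cMin k ≤ S.c k j :=
      csInf_le hTfin.bddBelow ⟨j, hjbound.1, hjbound.2, rfl⟩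
    have hlen1 : u.1.dropLast.length + 1 = k := by
      rw [List.length_dropLast]; omega
    have hratio : Metric.diam (S.Jmap u.1) = S.c k j * Metric.diam (S.Jmap u.1.dropLast) := by
      have h := S.hJ_ratio u.1.dropLast j (by rw [hsplit]; exact hword)
      rw [hsplit, hlen1] at h
      exact h
    have hJuLB : S.cMin k * Metric.diam F ≤ Metric.diam (S.Jmap u.1) := by
      rw [hratio]
      exact mul_le_mul hcMin_le hdgt.le hF0.le (S.hc_pos k j hk hjbound.1 hjbound.2).le
    obtain ⟨r, hr, f, hfd, hfim⟩ := S.hJ_sim u.1 hword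
    have hdiamJu : Metric.diam (S.Jmap u.1) = r * Metric.diam S.J := by
      rw [hfim]; exact aux_diam_sim hr hfd hJb
    have hfs : Function.Surjective f := by
      have hgi : Isometry (fun x => r⁻¹ • f x) := by
        apply Isometry.of_dist_eq
        intro x y
        rw [dist_smul₀, hfd, Real.norm_eq_abs, abs_of_pos (inv_pos.mpr hr)]
        field_simp
      have hgs := aux_isometry_surjective hgi
      intro y
      obtain ⟨x, hx⟩ := hgs (r⁻¹ • y)
      refine ⟨x, ?_⟩
      have : r • r⁻¹ • f x = r • r⁻¹ • y := congrArg (r • ·) hx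
      rwa [smul_inv_smul₀ hr.ne', smul_inv_smul₀ hr.ne'] at this
    have himg : f '' (ball x0 ρ) = ball (f x0) (r * ρ) := by
      ext z
      constructor
      · rintro ⟨w, hw, rfl⟩
        rw [mem_ball, hfd]
        exact mul_lt_mul_of_pos_left (mem_ball.mp hw) hr
      · intro hz
        obtain ⟨w, rfl⟩ := hfs z
        refine ⟨w, ?_, rfl⟩
        rw [mem_ball] at hz ⊢
        rw [hfd] at hz
        exact lt_of_mul_lt_mul_left hz hr.le
    set B := ball (f x0) (r * ρ) with hB
    have hBJ : B ⊆ S.Jmap u.1 := by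
      rw [← himg, hfim]
      exact Set.image_mono hballJ
    have hBsub : B ⊆ interior (S.Jmap u.1) := interior_maximal hBJ isOpen_ball
    have hJu_bdd : Bornology.IsBounded (S.Jmap u.1) := aux_Jmap_bounded S hword
    have hBc : B ⊆ closedBall q (2 * Metric.diam F) := by
      intro x hx
      obtain ⟨y, hyJ, hyF⟩ := hinter
      have hxJ : x ∈ S.Jmap u.1 := hBJ hx
      rw [mem_closedBall]
      calc dist x q ≤ dist x y + dist y q := dist_triangle x y q
        _ ≤ Metric.diam (S.Jmap u.1) + Metric.diam F :=
            add_le_add (dist_le_diam_of_mem hJu_bdd hxJ hyJ)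
              (dist_le_diam_of_mem hFbdd hyF hqF)
        _ ≤ Metric.diam F + Metric.diam F := by
            have := hdle; linarith
        _ = 2 * Metric.diam F := by ring
    have hvol : MeasureTheory.volume B =
        ENNReal.ofReal ((r * ρ) ^ d) * m := by
      rw [hB, MeasureTheory.Measure.addHaar_ball _ _ (by positivity),
        finrank_euclideanSpace_fin, hm]
    refine ⟨B, isOpen_ball, hBsub, hBc, ?_⟩
    rw [hvol, hK, ← mul_assoc, ← ENNReal.ofReal_mul (by positivity), ← mul_pow]
    refine mul_le_mul' (ENNReal.ofReal_le_ofReal ?_) le_rfl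
    apply pow_le_pow_left₀ (by positivity)
    have h1 : S.cMin k * Metric.diam F / Metric.diam S.J ≤ r := by
      rw [div_le_iff₀ hDJpos]
      rw [hdiamJu] at hJuLB
      linarith
    calc S.cMin k * (Metric.diam F * ρ / Metric.diam S.J)
        = (S.cMin k * Metric.diam F / Metric.diam S.J) * ρ := by ring
      _ ≤ r * ρ := mul_le_mul_of_nonneg_right h1 hρ.le
  choose B hBo hBi hBc hBv using key
  have hdisj : Pairwise (Function.onFun Disjoint B) := by
    intro u w huw
    exact Set.disjoint_of_subset (hBi u) (hBi w)
      (aux_interior_disjoint S u.2.1 w.2.1 (fun h => huw (Subtype.ext h)))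
  have hsum : ∑' u : ↥(S.AF F), MeasureTheory.volume (B u) ≤
      ENNReal.ofReal ((2 * Metric.diam F) ^ d) * m := by
    rw [← MeasureTheory.measure_iUnion hdisj (fun u => (hBo u).measurableSet)]
    calc MeasureTheory.volume (⋃ u, B u)
        ≤ MeasureTheory.volume (closedBall q (2 * Metric.diam F)) :=
          MeasureTheory.measure_mono (Set.iUnion_subset hBc)
      _ = _ := by
          rw [MeasureTheory.Measure.addHaar_closedBall _ _
            (by have := hF0.le; linarith), finrank_euclideanSpace_fin, hm]
  have hmain : (∑' u : ↥(S.AF F), ENNReal.ofReal (S.cMin u.1.length ^ d)) * K ≤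
      ENNReal.ofReal ((2 * Metric.diam F) ^ d) * m := by
    rw [← ENNReal.tsum_mul_right]
    exact le_trans (ENNReal.tsum_le_tsum (fun u => hBv u)) hsum
  have hRC : ENNReal.ofReal ((2 * Metric.diam F) ^ d) * m ≤
      ENNReal.ofReal ((2 * Metric.diam S.J / ρ) ^ d) * K := by
    rw [hK, ← mul_assoc, ← ENNReal.ofReal_mul (by positivity), ← mul_pow]
    refine mul_le_mul' (ENNReal.ofReal_le_ofReal ?_) le_rfl
    have he : (2 * Metric.diam S.J / ρ) * (Metric.diam F * ρ / Metric.diam S.J)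
        = 2 * Metric.diam F := by
      field_simp
    rw [he]
  have hK0 : K ≠ 0 := mul_ne_zero (ENNReal.ofReal_pos.mpr (pow_pos hbase d)).ne' hm0
  have hKtop : K ≠ ⊤ := ENNReal.mul_ne_top ENNReal.ofReal_ne_top hmtop
  have SA : (∑' u : ↥(S.AF F), ENNReal.ofReal (S.cMin u.1.length ^ d)) ≤
      ENNReal.ofReal ((2 * Metric.diam S.J / ρ) ^ d) :=
    (ENNReal.mul_le_mul_iff_left hK0 hKtop).mp (hmain.trans hRC)
  simp only [Real.rpow_natCast]
  calc ∑' k : ↥(Set.Ici k0),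
        ENNReal.ofReal (S.cMin ↑k ^ d) * ((S.DF F ↑k).encard : ENNReal)
      ≤ ∑' k : ℕ, ENNReal.ofReal (S.cMin k ^ d) * ((S.DF F k).encard : ENNReal) :=
        Summable.tsum_le_tsum_of_inj Subtype.val Subtype.val_injective
          (fun _ _ => zero_le) (fun _ => le_rfl) ENNReal.summable ENNReal.summable
    _ = ∑' k : ℕ, ∑' u : ↥(S.DF F k), ENNReal.ofReal (S.cMin (u.1.length) ^ d) := by
        refine tsum_congr fun k => ?_
        rw [show (∑' u : ↥(S.DF F k), ENNReal.ofReal (S.cMin (u.1.length) ^ d))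
            = ∑' _u : ↥(S.DF F k), ENNReal.ofReal (S.cMin k ^ d) from
          tsum_congr fun u => by rw [u.2.2]]
        rw [ENNReal.tsum_set_const, mul_comm]
    _ = ∑' p : (Σ k : ℕ, ↥(S.DF F k)), ENNReal.ofReal (S.cMin (p.2.1.length) ^ d) :=
        (ENNReal.tsum_sigma (fun k (u : ↥(S.DF F k)) =>
          ENNReal.ofReal (S.cMin u.1.length ^ d))).symm
    _ ≤ ∑' u : ↥(S.AF F), ENNReal.ofReal (S.cMin (u.1.length) ^ d) := by
        refine Summable.tsum_le_tsum_of_inj (fun p => (⟨p.2.1, p.2.2.1⟩ : ↥(S.AF F))) ?_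
          (fun _ _ => zero_le) (fun _ => le_rfl) ENNReal.summable ENNReal.summable
        rintro ⟨k, u⟩ ⟨k', u'⟩ hpq
        have hv : u.1 = u'.1 := congrArg Subtype.val hpq
        have hkk : k = k' := by rw [← u.2.2, ← u'.2.2, hv]
        subst hkk
        rw [Subtype.ext hv]
    _ ≤ ENNReal.ofReal ((2 * Metric.diam S.J / ρ) ^ d) := SA
end
end

section
/- Let E ⊂ ℝ^d be a homogeneous Moran set with c_* = 0 and |J| = 1 such that lim_{k→∞} (log c_k)/(log(c_1⋯c_k)) = 0. Then for every θ ∈ (0,1], s^θ = limsup_{k→∞} min_{k≤m≤l(k,θ)} s_m, where s_m = −log(n_1⋯n_m)/log(c_1⋯c_m) and s^θ = limsup_{δ→0} s_{δ,θ}. -/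
open Metric Set Filter Topology

noncomputable section

section AuxMoran

namespace MoranStructure

variable {X : Type} [MetricSpace X] {d : ℕ}

/-- real product of the branching numbers -/
def Nprod (S : MoranStructure X d) (k : ℕ) : ℝ := ∏ i ∈ Finset.Icc 1 k, (S.n i : ℝ)

theorem aux_c_pos (S : MoranStructure X d) {k : ℕ} (hk : 1 ≤ k) : 0 < S.c k 1 :=
  S.hc_pos k 1 hk le_rfl (le_trans one_le_two (S.hn k hk))

theorem aux_n_mul_c_rpow_le (S : MoranStructure X d) (hhom : S.Homogeneous)
    {k : ℕ} (hk : 1 ≤ k) : (S.n k : ℝ) * S.c k 1 ^ (d : ℝ) ≤ 1 := by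
  have h := S.hc_sum k hk
  have heq : ∑ j ∈ Finset.Icc 1 (S.n k), S.c k j ^ (d : ℝ)
      = (S.n k : ℝ) * S.c k 1 ^ (d : ℝ) := by
    rw [Finset.sum_congr rfl (fun j hj => by
      rw [hhom k j hk (Finset.mem_Icc.mp hj).1 (Finset.mem_Icc.mp hj).2]),
      Finset.sum_const, Nat.card_Icc, nsmul_eq_mul]
    norm_num
  linarith [heq ▸ h]

theorem aux_c_le (hd : 1 ≤ d) (S : MoranStructure X d) (hhom : S.Homogeneous)
    {k : ℕ} (hk : 1 ≤ k) : S.c k 1 ≤ (2:ℝ)⁻¹ ^ ((d:ℝ)⁻¹) := by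
  have hc := S.aux_c_pos hk
  have hn : (2:ℝ) ≤ (S.n k : ℝ) := by exact_mod_cast S.hn k hk
  have h := S.aux_n_mul_c_rpow_le hhom hk
  have hcd : S.c k 1 ^ (d:ℝ) ≤ (2:ℝ)⁻¹ := by
    nlinarith [Real.rpow_pos_of_pos hc (d:ℝ)]
  have hd0 : (d:ℝ) ≠ 0 := by positivity
  calc S.c k 1 = (S.c k 1 ^ (d:ℝ)) ^ ((d:ℝ)⁻¹) := by
        rw [← Real.rpow_mul hc.le, mul_inv_cancel₀ hd0, Real.rpow_one]
    _ ≤ (2:ℝ)⁻¹ ^ ((d:ℝ)⁻¹) :=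
        Real.rpow_le_rpow (Real.rpow_pos_of_pos hc _).le hcd (by positivity)

theorem aux_q_lt_one (hd : 1 ≤ d) : ((2:ℝ)⁻¹ ^ ((d:ℝ)⁻¹) : ℝ) < 1 :=
  Real.rpow_lt_one (by norm_num) (by norm_num) (by positivity)

theorem aux_c_lt_one (hd : 1 ≤ d) (S : MoranStructure X d) (hhom : S.Homogeneous)
    {k : ℕ} (hk : 1 ≤ k) : S.c k 1 < 1 :=
  lt_of_le_of_lt (S.aux_c_le hd hhom hk) (aux_q_lt_one hd)

theorem cHomProd_zero (S : MoranStructure X d) : S.cHomProd 0 = 1 := by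
  simp [cHomProd]

theorem cHomProd_succ (S : MoranStructure X d) (k : ℕ) :
    S.cHomProd (k+1) = S.cHomProd k * S.c (k+1) 1 :=
  Finset.prod_Icc_succ_top (Nat.succ_le_succ (Nat.zero_le k)) _

theorem cHomProd_pos (S : MoranStructure X d) (k : ℕ) : 0 < S.cHomProd k :=
  Finset.prod_pos fun i hi => S.aux_c_pos (Finset.mem_Icc.mp hi).1

theorem cHomProd_le_one (hd : 1 ≤ d) (S : MoranStructure X d) (hhom : S.Homogeneous)
    (k : ℕ) : S.cHomProd k ≤ 1 := by
  induction k with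
  | zero => simp [cHomProd]
  | succ k ih =>
    rw [S.cHomProd_succ k]
    have h1 := S.aux_c_lt_one hd hhom (Nat.succ_le_succ (Nat.zero_le k))
    have h2 := S.aux_c_pos (k := k+1) (Nat.succ_le_succ (Nat.zero_le k))
    nlinarith [S.cHomProd_pos k]

theorem cHomProd_anti (hd : 1 ≤ d) (S : MoranStructure X d) (hhom : S.Homogeneous)
    {k m : ℕ} (h : k ≤ m) : S.cHomProd m ≤ S.cHomProd k := by
  induction m with
  | zero => simp_all
  | succ m ih =>
    rcases Nat.lt_or_ge k (m+1) with h' | h'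
    · have := ih (Nat.lt_succ_iff.mp h')
      rw [S.cHomProd_succ m]
      have h1 := (S.aux_c_lt_one hd hhom (Nat.succ_le_succ (Nat.zero_le m))).le
      have h2 := S.aux_c_pos (k := m+1) (Nat.succ_le_succ (Nat.zero_le m))
      nlinarith [S.cHomProd_pos m]
    · have : k = m + 1 := le_antisymm h h'
      simp [this]

theorem cHomProd_strict_anti (hd : 1 ≤ d) (S : MoranStructure X d) (hhom : S.Homogeneous)
    {k m : ℕ} (h : k < m) : S.cHomProd m < S.cHomProd k := by
  have h1 : S.cHomProd m ≤ S.cHomProd (k+1) := S.cHomProd_anti hd hhom h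
  refine lt_of_le_of_lt h1 ?_
  rw [S.cHomProd_succ k]
  have hc1 := S.aux_c_lt_one hd hhom (Nat.succ_le_succ (Nat.zero_le k))
  have hc2 := S.aux_c_pos (k := k+1) (Nat.succ_le_succ (Nat.zero_le k))
  nlinarith [S.cHomProd_pos k]

theorem cHomProd_le_pow (hd : 1 ≤ d) (S : MoranStructure X d) (hhom : S.Homogeneous)
    (k : ℕ) : S.cHomProd k ≤ ((2:ℝ)⁻¹ ^ ((d:ℝ)⁻¹)) ^ k := by
  induction k with
  | zero => simp [cHomProd]
  | succ k ih =>
    rw [S.cHomProd_succ k, pow_succ]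
    have h1 := S.aux_c_le hd hhom (k := k+1) (Nat.succ_le_succ (Nat.zero_le k))
    have h2 := S.aux_c_pos (k := k+1) (Nat.succ_le_succ (Nat.zero_le k))
    have h3 := S.cHomProd_pos k
    have hq : (0:ℝ) < (2:ℝ)⁻¹ ^ ((d:ℝ)⁻¹) := by positivity
    nlinarith

theorem exists_cHomProd_le (hd : 1 ≤ d) (S : MoranStructure X d) (hhom : S.Homogeneous)
    {δ : ℝ} (hδ : 0 < δ) : ∃ m, S.cHomProd m ≤ δ := by
  obtain ⟨m, hm⟩ := exists_pow_lt_of_lt_one hδ (aux_q_lt_one hd)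
  exact ⟨m, (S.cHomProd_le_pow hd hhom m).trans hm.le⟩

theorem isWord_take {n : ℕ → ℕ} {u : List ℕ} (h : IsWord n u) (t : ℕ) :
    IsWord n (u.take t) := by
  intro i
  have hi : (i : ℕ) < u.length := lt_of_lt_of_le i.2 (by simp)
  have hget : (u.take t).get i = u[(i:ℕ)] := by
    show (u.take t)[(i:ℕ)] = _
    rw [List.getElem_take]
  rw [hget]
  exact h ⟨i, hi⟩

theorem isWord_append_elim {n : ℕ → ℕ} {u : List ℕ} {j : ℕ} (h : IsWord n (u ++ [j])) :
    IsWord n u ∧ 1 ≤ j ∧ j ≤ n (u.length + 1) := by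
  refine ⟨fun i => ?_, ?_⟩
  · have hi : (i:ℕ) < (u ++ [j]).length := by simp
    have h2 := h ⟨i, hi⟩
    simp only [List.get_eq_getElem] at h2 ⊢
    rwa [List.getElem_append_left i.2] at h2
  · have hi : u.length < (u ++ [j]).length := by simp
    have h2 := h ⟨u.length, hi⟩
    simpa using h2

theorem isWord_append_intro {n : ℕ → ℕ} {u : List ℕ} {j : ℕ} (hu : IsWord n u)
    (h1 : 1 ≤ j) (h2 : j ≤ n (u.length + 1)) : IsWord n (u ++ [j]) := by
  intro i
  rcases Nat.lt_or_ge (i : ℕ) u.length with hlt | hge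
  · have := hu ⟨i, hlt⟩
    simp only [List.get_eq_getElem] at this ⊢
    rwa [List.getElem_append_left hlt]
  · have hi : (i:ℕ) < u.length + 1 := by have := i.2; simpa using this
    have : (i:ℕ) = u.length := by omega
    simp only [List.get_eq_getElem, this]
    simpa using ⟨h1, h2⟩

theorem word_diam (S : MoranStructure X d) (hhom : S.Homogeneous)
    (hJdiam : diam S.J = 1) {u : List ℕ} (h : IsWord S.n u) :
    diam (S.Jmap u) = S.cHomProd u.length := by
  induction u using List.reverseRecOn with
  | nil => simpa [S.hJ_nil, S.cHomProd_zero] using hJdiam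
  | append_singleton u j ih =>
    obtain ⟨hu, hj1, hj2⟩ := isWord_append_elim h
    have hr := S.hJ_ratio u j h
    rw [hr, ih hu, List.length_append, List.length_singleton, S.cHomProd_succ,
      hhom (u.length+1) j (Nat.succ_le_succ (Nat.zero_le _)) hj1 hj2, mul_comm]

theorem aux_append_singleton_injective :
    Function.Injective (fun p : List ℕ × ℕ => p.1 ++ [p.2]) := by
  rintro ⟨a, i⟩ ⟨b, j⟩ h
  simp only at h
  obtain ⟨h1, h2⟩ := List.append_inj' h (by simp)
  simp_all

/-- The finset of valid words extending `u` by `t` further letters. -/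
def lvlExt (S : MoranStructure X d) (u : List ℕ) : ℕ → Finset (List ℕ)
  | 0 => {u}
  | (t+1) => ((S.lvlExt u t) ×ˢ Finset.Icc 1 (S.n (u.length + t + 1))).image
      (fun p => p.1 ++ [p.2])

theorem mem_lvlExt (S : MoranStructure X d) {u : List ℕ} (hu : IsWord S.n u) (t : ℕ)
    (w : List ℕ) :
    w ∈ S.lvlExt u t ↔ (u <+: w ∧ w.length = u.length + t ∧ IsWord S.n w) := by
  induction t generalizing w with
  | zero =>
    simp only [lvlExt, Finset.mem_singleton, Nat.add_zero]
    constructor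
    · rintro rfl; exact ⟨List.prefix_refl _, rfl, hu⟩
    · rintro ⟨hp, hl, _⟩; exact (hp.eq_of_length (by omega)).symm
  | succ t ih =>
    constructor
    · intro hw
      simp only [lvlExt, Finset.mem_image, Finset.mem_product] at hw
      obtain ⟨⟨w', j⟩, ⟨hw', hj⟩, rfl⟩ := hw
      obtain ⟨hp, hl, hword⟩ := (ih w').mp hw'
      rw [Finset.mem_Icc] at hj
      refine ⟨hp.trans (List.prefix_append w' [j]), by simp [hl]; omega, ?_⟩
      exact isWord_append_intro hword hj.1 (by rw [hl]; exact hj.2)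
    · rintro ⟨hp, hl, hw⟩
      have hne : w ≠ [] := List.length_pos_iff.mp (by omega)
      have hsplit := List.dropLast_append_getLast hne
      have hldl : w.dropLast.length = u.length + t := by
        rw [List.length_dropLast, hl]; omega
      simp only [lvlExt, Finset.mem_image, Finset.mem_product]
      refine ⟨⟨w.dropLast, w.getLast hne⟩, ⟨?_, ?_⟩, hsplit⟩
      · rw [ih]
        refine ⟨?_, hldl, ?_⟩
        · rw [List.prefix_iff_eq_take] at hp ⊢
          rw [List.dropLast_eq_take, hl, Nat.add_succ, Nat.succ_sub_one,
            List.take_take, min_eq_left (Nat.le_add_right _ _)]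
          exact hp
        · have := isWord_take hw (w.length - 1)
          rwa [← List.dropLast_eq_take] at this
      · rw [Finset.mem_Icc]
        have hi : u.length + t < w.length := by omega
        have h2 := hw ⟨u.length + t, hi⟩
        have : w.get ⟨u.length + t, hi⟩ = w.getLast hne := by
          rw [List.getLast_eq_getElem]
          simp only [List.get_eq_getElem, hl, Nat.add_succ, Nat.succ_sub_one]
        rwa [this] at h2

theorem card_lvlExt (S : MoranStructure X d) (u : List ℕ) (t : ℕ) :
    (S.lvlExt u t).card = ∏ i ∈ Finset.Icc (u.length + 1) (u.length + t), S.n i := by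
  induction t with
  | zero => simp [lvlExt]
  | succ t ih =>
    rw [lvlExt, Finset.card_image_of_injective _ aux_append_singleton_injective,
      Finset.card_product, ih, Nat.card_Icc, ← Nat.add_assoc,
      Finset.prod_Icc_succ_top (by omega : u.length + 1 ≤ u.length + t + 1)]
    simp [Nat.add_sub_cancel_left]

theorem Nprod_pos (S : MoranStructure X d) (k : ℕ) : 0 < S.Nprod k :=
  Finset.prod_pos fun i hi => by
    have := S.hn i (Finset.mem_Icc.mp hi).1; positivity

theorem Nprod_eq_cast (S : MoranStructure X d) (k : ℕ) :
    S.Nprod k = ((∏ i ∈ Finset.Icc 1 k, S.n i : ℕ) : ℝ) := by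
  unfold Nprod; push_cast; rfl

theorem one_le_Nprod (S : MoranStructure X d) (k : ℕ) : 1 ≤ S.Nprod k := by
  rw [S.Nprod_eq_cast]
  have h2 : (1:ℕ) ≤ ∏ i ∈ Finset.Icc 1 k, S.n i :=
    Finset.one_le_prod' fun i hi =>
      le_trans one_le_two (S.hn i (Finset.mem_Icc.mp hi).1)
  exact_mod_cast h2

theorem Nprod_mono (S : MoranStructure X d) {k m : ℕ} (h : k ≤ m) :
    S.Nprod k ≤ S.Nprod m := by
  rw [S.Nprod_eq_cast, S.Nprod_eq_cast]
  have h2 : (∏ i ∈ Finset.Icc 1 k, S.n i) ≤ ∏ i ∈ Finset.Icc 1 m, S.n i :=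
    Finset.prod_le_prod_of_subset_of_one_le' (Finset.Icc_subset_Icc_right h)
      (fun i hi _ => le_trans one_le_two (S.hn i (Finset.mem_Icc.mp hi).1))
  exact_mod_cast h2

theorem Nprod_split (S : MoranStructure X d) {m B : ℕ} (h : m ≤ B) :
    S.Nprod B = S.Nprod m * ∏ i ∈ Finset.Icc (m + 1) B, (S.n i : ℝ) := by
  unfold Nprod
  have e : ∀ k : ℕ, Finset.Icc 1 k = Finset.Ioc 0 k := fun k => by
    ext x; simp; omega
  have e2 : Finset.Icc (m+1) B = Finset.Ioc m B := by
    ext x; simp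
  rw [e, e, e2, ← Finset.prod_Ioc_consecutive _ (Nat.zero_le m) h]

theorem card_lvlExt_nil (S : MoranStructure X d) (t : ℕ) :
    ((S.lvlExt [] t).card : ℝ) = S.Nprod t := by
  rw [S.card_lvlExt]
  simp [Nprod]

theorem cHomProd_lt_one (hd : 1 ≤ d) (S : MoranStructure X d) (hhom : S.Homogeneous)
    {m : ℕ} (hm : 1 ≤ m) : S.cHomProd m < 1 := by
  have := S.cHomProd_strict_anti hd hhom (show 0 < m from hm)
  rwa [S.cHomProd_zero] at this

theorem logC_neg (hd : 1 ≤ d) (S : MoranStructure X d) (hhom : S.Homogeneous)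
    {m : ℕ} (hm : 1 ≤ m) : Real.log (S.cHomProd m) < 0 :=
  Real.log_neg (S.cHomProd_pos m) (S.cHomProd_lt_one hd hhom hm)

theorem sHom_eq (S : MoranStructure X d) (m : ℕ) :
    S.sHom m = - Real.log (S.Nprod m) / Real.log (S.cHomProd m) := rfl

theorem sHom_eq' (S : MoranStructure X d) (m : ℕ) :
    S.sHom m = Real.log (S.Nprod m) / (- Real.log (S.cHomProd m)) := by
  rw [S.sHom_eq, div_neg, neg_div]

theorem sHom_nonneg (hd : 1 ≤ d) (S : MoranStructure X d) (hhom : S.Homogeneous)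
    (m : ℕ) : 0 ≤ S.sHom m := by
  rcases Nat.eq_zero_or_pos m with rfl | hm
  · simp [sHom, cHomProd]
  · rw [S.sHom_eq']
    have hB : 0 < -Real.log (S.cHomProd m) := by linarith [S.logC_neg hd hhom hm]
    exact div_nonneg (Real.log_nonneg (S.one_le_Nprod m)) hB.le

theorem NC_le_one (S : MoranStructure X d) (hhom : S.Homogeneous) (m : ℕ) :
    S.Nprod m * S.cHomProd m ^ (d:ℝ) ≤ 1 := by
  have hC : S.cHomProd m ^ (d:ℝ) = ∏ i ∈ Finset.Icc 1 m, S.c i 1 ^ (d:ℝ) :=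
    (Real.finset_prod_rpow _ _ (fun i hi => (S.aux_c_pos (Finset.mem_Icc.mp hi).1).le) _).symm
  rw [Nprod, hC, ← Finset.prod_mul_distrib]
  refine Finset.prod_le_one (fun i hi => ?_) (fun i hi => ?_)
  · have h1 := S.aux_c_pos (Finset.mem_Icc.mp hi).1
    positivity
  · exact S.aux_n_mul_c_rpow_le hhom (Finset.mem_Icc.mp hi).1

theorem sHom_le_d (hd : 1 ≤ d) (S : MoranStructure X d) (hhom : S.Homogeneous)
    (m : ℕ) : S.sHom m ≤ d := by
  rcases Nat.eq_zero_or_pos m with rfl | hm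
  · simp [sHom, cHomProd]
  · have hC := S.cHomProd_pos m
    have hN := S.Nprod_pos m
    have hB : 0 < -Real.log (S.cHomProd m) := by linarith [S.logC_neg hd hhom hm]
    have hrp : (0:ℝ) < S.cHomProd m ^ (d:ℝ) := Real.rpow_pos_of_pos hC _
    have h2 : S.Nprod m ≤ (S.cHomProd m ^ (d:ℝ))⁻¹ := by
      nlinarith [S.NC_le_one hhom m, mul_inv_cancel₀ (ne_of_gt hrp), hrp]
    have hlog : Real.log (S.Nprod m) ≤ (d:ℝ) * (-Real.log (S.cHomProd m)) := by
      calc Real.log (S.Nprod m) ≤ Real.log ((S.cHomProd m ^ (d:ℝ))⁻¹) :=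
            Real.log_le_log hN h2
        _ = -((d:ℝ) * Real.log (S.cHomProd m)) := by
            rw [Real.log_inv, Real.log_rpow hC]
        _ = (d:ℝ) * (-Real.log (S.cHomProd m)) := by ring
    rw [S.sHom_eq', div_le_iff₀ hB]
    exact hlog

theorem rpow_sHom (hd : 1 ≤ d) (S : MoranStructure X d) (hhom : S.Homogeneous)
    {m : ℕ} (hm : 1 ≤ m) : S.cHomProd m ^ (S.sHom m) = 1 / S.Nprod m := by
  have hC := S.cHomProd_pos m
  have hlog := S.logC_neg hd hhom hm
  rw [S.sHom_eq, Real.rpow_def_of_pos hC, mul_div_cancel₀ _ (ne_of_lt hlog),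
    Real.exp_neg, Real.exp_log (S.Nprod_pos m), one_div]

theorem nil_isWord (S : MoranStructure X d) : IsWord S.n ([] : List ℕ) :=
  fun i => absurd i.2 (by simp)

/-- key counting inequality: a family of words covering all infinite words
carries total weight at least 1. -/
theorem cut_weight (S : MoranStructure X d) (A : Finset (List ℕ)) {B : ℕ}
    (hw : ∀ u ∈ A, IsWord S.n u ∧ u.length ≤ B)
    (hcov : ∀ v : ℕ → ℕ, IsInfWord S.n v → ∃ u ∈ A, v ∈ Cylinder S.n u) :
    1 ≤ ∑ u ∈ A, 1 / S.Nprod u.length := by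
  have hsub : S.lvlExt [] B ⊆ A.biUnion (fun u => S.lvlExt u (B - u.length)) := by
    intro w hwmem
    obtain ⟨-, hlen, hword⟩ := (S.mem_lvlExt S.nil_isWord B w).mp hwmem
    simp only [List.length_nil, Nat.zero_add] at hlen
    set v : ℕ → ℕ := fun i => w.getD (i-1) 1 with hv
    have hvinf : IsInfWord S.n v := by
      intro k hk
      rcases Nat.lt_or_ge (k-1) w.length with hlt | hge
      · have : v k = w[k-1] := List.getD_eq_getElem w 1 hlt
        rw [this]
        have h2 := hword ⟨k-1, hlt⟩
        have h3 : k - 1 + 1 = k := by omega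
        rwa [h3] at h2
      · have : v k = 1 := List.getD_eq_default w 1 hge
        rw [this]
        exact ⟨le_refl 1, le_trans one_le_two (S.hn k hk)⟩
    obtain ⟨u, huA, hcyl⟩ := hcov v hvinf
    obtain ⟨huw, hulen⟩ := hw u huA
    rw [Finset.mem_biUnion]
    refine ⟨u, huA, ?_⟩
    rw [S.mem_lvlExt huw]
    have hgetu : ∀ i (h1 : i < u.length), u[i] = w[i]'(by omega) := by
      intro i h1
      have h4 := hcyl.2 ⟨i, h1⟩
      have hv2 : v (i+1) = w[i]'(by omega) := by
        show w.getD (i+1-1) 1 = _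
        have h3 : i + 1 - 1 = i := by omega
        rw [h3]
        exact List.getD_eq_getElem w 1 (by omega)
      calc u[i] = v (i+1) := by exact h4.symm
        _ = w[i]'(by omega) := hv2
    have hpre : u <+: w := by
      rw [List.prefix_iff_eq_take]
      refine List.ext_getElem (by simp [hlen]; omega) ?_
      intro i h1 h2
      rw [List.getElem_take]
      exact hgetu i h1
    exact ⟨hpre, by omega, hword⟩
  have hcard : ((S.lvlExt [] B).card : ℝ) ≤ ∑ u ∈ A, ((S.lvlExt u (B - u.length)).card : ℝ) := by
    have h1 : (S.lvlExt [] B).card ≤ (A.biUnion (fun u => S.lvlExt u (B - u.length))).card :=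
      Finset.card_le_card hsub
    have h2 := Finset.card_biUnion_le (s := A) (t := fun u => S.lvlExt u (B - u.length))
    exact_mod_cast le_trans h1 h2
  have hNB := S.Nprod_pos B
  rw [S.card_lvlExt_nil] at hcard
  have hterm : ∀ u ∈ A, ((S.lvlExt u (B - u.length)).card : ℝ)
      = S.Nprod B * (1 / S.Nprod u.length) := by
    intro u huA
    obtain ⟨-, hulen⟩ := hw u huA
    have hc : ((S.lvlExt u (B - u.length)).card : ℝ)
        = ∏ i ∈ Finset.Icc (u.length + 1) B, (S.n i : ℝ) := by
      rw [S.card_lvlExt]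
      have h3 : u.length + (B - u.length) = B := by omega
      rw [h3]
      push_cast
      rfl
    rw [hc, S.Nprod_split hulen]
    have := S.Nprod_pos u.length
    field_simp
  rw [Finset.sum_congr rfl hterm, ← Finset.mul_sum] at hcard
  nlinarith [hcard]

theorem isWord_dropLast {n : ℕ → ℕ} {u : List ℕ} (h : IsWord n u) : IsWord n u.dropLast := by
  rw [List.dropLast_eq_take]
  exact isWord_take h _

/-- `kOf δ` : the first level whose diameter is `≤ δ`. -/
def kOf (S : MoranStructure X d) (δ : ℝ) : ℕ := sInf {m | S.cHomProd m ≤ δ}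

theorem kOf_spec (hd : 1 ≤ d) (S : MoranStructure X d) (hhom : S.Homogeneous)
    {δ : ℝ} (hδ : 0 < δ) : S.cHomProd (S.kOf δ) ≤ δ :=
  Nat.sInf_mem (S.exists_cHomProd_le hd hhom hδ)

theorem kOf_le (S : MoranStructure X d) {δ : ℝ} {m : ℕ} (h : S.cHomProd m ≤ δ) :
    S.kOf δ ≤ m := Nat.sInf_le h

theorem lt_of_lt_kOf (S : MoranStructure X d) {δ : ℝ} {m : ℕ} (h : m < S.kOf δ) :
    δ < S.cHomProd m := by
  by_contra h2
  push_neg at h2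
  exact absurd (S.kOf_le h2) (by omega)

theorem one_le_kOf (hd : 1 ≤ d) (S : MoranStructure X d) (hhom : S.Homogeneous)
    {δ : ℝ} (hδ0 : 0 < δ) (hδ1 : δ < 1) : 1 ≤ S.kOf δ := by
  by_contra h
  push_neg at h
  have h0 : S.kOf δ = 0 := by omega
  have := S.kOf_spec hd hhom hδ0
  rw [h0, S.cHomProd_zero] at this
  linarith

theorem kOf_ge (hd : 1 ≤ d) (S : MoranStructure X d) (hhom : S.Homogeneous)
    {δ : ℝ} (hδ0 : 0 < δ) {m : ℕ} (h : S.kOf δ ≤ m) : S.cHomProd m ≤ δ :=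
  le_trans (S.cHomProd_anti hd hhom h) (S.kOf_spec hd hhom hδ0)

theorem kOf_mono (hd : 1 ≤ d) (S : MoranStructure X d) (hhom : S.Homogeneous)
    {δ δ' : ℝ} (hδ0 : 0 < δ) (h : δ ≤ δ') : S.kOf δ' ≤ S.kOf δ :=
  S.kOf_le (le_trans (S.kOf_spec hd hhom hδ0) h)

theorem window_iff (hd : 1 ≤ d) (S : MoranStructure X d) (hhom : S.Homogeneous)
    {θ δ : ℝ} (hθ : θ ∈ Set.Ioc (0:ℝ) 1) (hδ0 : 0 < δ) (hδ1 : δ < 1) (m : ℕ) :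
    (S.cHomProd m ≤ δ ∧ δ ^ (1/θ) < S.cHomProd (m-1)) ↔
      (S.kOf δ ≤ m ∧ m ≤ S.kOf (δ ^ (1/θ))) := by
  have hδ'0 : 0 < δ ^ (1/θ) := Real.rpow_pos_of_pos hδ0 _
  have hδ'1 : δ ^ (1/θ) < 1 := Real.rpow_lt_one hδ0.le hδ1 (one_div_pos.mpr hθ.1)
  constructor
  · rintro ⟨h1, h2⟩
    refine ⟨S.kOf_le h1, ?_⟩
    have hm1 : 1 ≤ m := by
      by_contra h
      push_neg at h
      have hm0 : m = 0 := by omega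
      rw [hm0, S.cHomProd_zero] at h1
      linarith
    by_contra h3
    push_neg at h3
    have h4 : S.kOf (δ^(1/θ)) ≤ m - 1 := by omega
    have h5 := S.kOf_ge hd hhom hδ'0 h4
    linarith
  · rintro ⟨h1, h2⟩
    refine ⟨S.kOf_ge hd hhom hδ0 h1, ?_⟩
    have hk1 := S.one_le_kOf hd hhom hδ'0 hδ'1
    exact S.lt_of_lt_kOf (by omega)

theorem sdt_eq_min (hd : 1 ≤ d) (S : MoranStructure X d) (hhom : S.Homogeneous)
    (hJdiam : diam S.J = 1) {θ δ : ℝ} (hθ : θ ∈ Set.Ioc (0:ℝ) 1)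
    (hδ0 : 0 < δ) (hδ1 : δ < 1) :
    S.sdt δ θ = sInf {x | ∃ m, S.kOf δ ≤ m ∧ m ≤ S.kOf (δ ^ (1/θ)) ∧ x = S.sHom m} := by
  have hθ0 := hθ.1
  have hδ'0 : 0 < δ ^ (1/θ) := Real.rpow_pos_of_pos hδ0 _
  have hδ'1 : δ ^ (1/θ) < 1 := Real.rpow_lt_one hδ0.le hδ1 (one_div_pos.mpr hθ0)
  have h1θ : 1 ≤ 1/θ := by rw [le_div_iff₀ hθ0]; linarith [hθ.2]
  have hδ'δ : δ ^ (1/θ) ≤ δ := by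
    have := Real.rpow_le_rpow_of_exponent_ge hδ0 hδ1.le h1θ
    rwa [Real.rpow_one] at this
  set k₀ := S.kOf δ with hk₀
  set L₀ := S.kOf (δ ^ (1/θ)) with hL₀
  have hk₀1 : 1 ≤ k₀ := S.one_le_kOf hd hhom hδ0 hδ1
  have hL₀1 : 1 ≤ L₀ := S.one_le_kOf hd hhom hδ'0 hδ'1
  have hkL : k₀ ≤ L₀ := S.kOf_mono hd hhom hδ'0 hδ'δ
  set W : Set ℝ := {x | ∃ m, k₀ ≤ m ∧ m ≤ L₀ ∧ x = S.sHom m} with hW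
  have hWeq : W = S.sHom '' (Set.Icc k₀ L₀) := by
    ext x
    constructor
    · rintro ⟨m, h1, h2, rfl⟩; exact ⟨m, ⟨h1, h2⟩, rfl⟩
    · rintro ⟨m, ⟨h1, h2⟩, rfl⟩; exact ⟨m, h1, h2, rfl⟩
  have hWfin : W.Finite := by rw [hWeq]; exact (Set.finite_Icc _ _).image _
  have hWne : W.Nonempty := ⟨S.sHom k₀, k₀, le_rfl, hkL, rfl⟩
  obtain ⟨m₀, hm₀1, hm₀2, hμ⟩ := hWne.csInf_mem hWfin
  set μ := sInf W with hμdef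
  have hμlb : ∀ m, k₀ ≤ m → m ≤ L₀ → μ ≤ S.sHom m := fun m h1 h2 =>
    csInf_le hWfin.bddBelow ⟨m, h1, h2, rfl⟩
  have hm₀pos : 1 ≤ m₀ := le_trans hk₀1 hm₀1
  -- membership of μ in the sdt defining set
  have hAmem : ∀ u : List ℕ, u ∈ (↑(S.lvlExt [] m₀) : Set (List ℕ)) ↔
      IsWord S.n u ∧ u.length = m₀ := by
    intro u
    rw [Finset.mem_coe, S.mem_lvlExt S.nil_isWord]
    constructor
    · rintro ⟨-, h1, h2⟩; exact ⟨h2, by simpa using h1⟩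
    · rintro ⟨h1, h2⟩; exact ⟨List.nil_prefix, by simpa using h2, h1⟩
  have hμmem : μ ∈ {s : ℝ | ∃ A : Set (List ℕ), IsCutSet S.n A ∧
      (∀ u ∈ A, δ ^ (1 / θ) < diam (S.Jmap u.dropLast) ∧ diam (S.Jmap u) ≤ δ) ∧
      ∑' u : A, diam (S.Jmap (u : List ℕ)) ^ s = 1} := by
    refine ⟨↑(S.lvlExt [] m₀), ⟨?_, ?_, ?_⟩, ?_, ?_⟩
    · intro u hu; exact ((hAmem u).mp hu).1
    · intro u hu w hw huw
      obtain ⟨hu1, hu2⟩ := (hAmem u).mp hu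
      obtain ⟨hw1, hw2⟩ := (hAmem w).mp hw
      rw [Set.eq_empty_iff_forall_notMem]
      rintro v ⟨⟨hvinf, hvu⟩, ⟨-, hvw⟩⟩
      refine huw (List.ext_getElem (by rw [hu2, hw2]) ?_)
      intro i h1 h2
      have e1 := hvu ⟨i, h1⟩
      have e2 := hvw ⟨i, h2⟩
      have : v (i+1) = u[i] := by exact e1
      have h4 : v (i+1) = w[i] := by exact e2
      rw [← this, h4]
    · intro v hv
      set p : List ℕ := (List.range m₀).map (fun i => v (i+1)) with hp
      have hplen : p.length = m₀ := by simp [hp]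
      have hpget : ∀ i (h : i < p.length), p[i] = v (i+1) := by
        intro i h
        simp [hp]
      have hpw : IsWord S.n p := by
        intro i
        have := hpget i i.2
        show 1 ≤ p[(i:ℕ)] ∧ p[(i:ℕ)] ≤ S.n ((i:ℕ)+1)
        rw [this]
        exact hv ((i:ℕ)+1) (by omega)
      refine Set.mem_iUnion₂.mpr ⟨p, (hAmem p).mpr ⟨hpw, hplen⟩, hv, ?_⟩
      intro i
      exact (hpget i i.2).symm
    · intro u hu
      obtain ⟨hu1, hu2⟩ := (hAmem u).mp hu
      have hdiam : diam (S.Jmap u) = S.cHomProd m₀ := by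
        rw [S.word_diam hhom hJdiam hu1, hu2]
      have hdiam' : diam (S.Jmap u.dropLast) = S.cHomProd (m₀ - 1) := by
        rw [S.word_diam hhom hJdiam (isWord_dropLast hu1), List.length_dropLast, hu2]
      constructor
      · rw [hdiam']
        exact S.lt_of_lt_kOf (by omega)
      · rw [hdiam]
        exact S.kOf_ge hd hhom hδ0 hm₀1
    · rw [Finset.tsum_subtype' (S.lvlExt [] m₀) (fun u => diam (S.Jmap u) ^ μ)]
      have hterm : ∀ u ∈ S.lvlExt [] m₀,
          diam (S.Jmap u) ^ μ = S.cHomProd m₀ ^ S.sHom m₀ := by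
        intro u hu
        obtain ⟨hu1, hu2⟩ := (hAmem u).mp (Finset.mem_coe.mpr hu)
        rw [S.word_diam hhom hJdiam hu1, hu2, hμ]
      rw [Finset.sum_congr rfl hterm, Finset.sum_const, nsmul_eq_mul,
        S.card_lvlExt_nil, S.rpow_sHom hd hhom hm₀pos, mul_one_div,
        div_self (ne_of_gt (S.Nprod_pos m₀))]
  -- lower bound
  have hμlow : ∀ s ∈ {s : ℝ | ∃ A : Set (List ℕ), IsCutSet S.n A ∧
      (∀ u ∈ A, δ ^ (1 / θ) < diam (S.Jmap u.dropLast) ∧ diam (S.Jmap u) ≤ δ) ∧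
      ∑' u : A, diam (S.Jmap (u : List ℕ)) ^ s = 1}, μ ≤ s := by
    rintro s ⟨A, hcut, hcons, hsum⟩
    have hwin : ∀ u ∈ A, k₀ ≤ u.length ∧ u.length ≤ L₀ := by
      intro u hu
      have hword := hcut.1 u hu
      obtain ⟨hc1, hc2⟩ := hcons u hu
      have hdiam : diam (S.Jmap u) = S.cHomProd u.length :=
        S.word_diam hhom hJdiam hword
      have hdiam' : diam (S.Jmap u.dropLast) = S.cHomProd (u.length - 1) := by
        rw [S.word_diam hhom hJdiam (isWord_dropLast hword), List.length_dropLast]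
      exact (S.window_iff hd hhom hθ hδ0 hδ1 u.length).mp
        ⟨hdiam ▸ hc2, hdiam' ▸ hc1⟩
    have hAsub : A ⊆ ↑((Finset.range (L₀+1)).biUnion (fun t => S.lvlExt [] t)) := by
      intro u hu
      rw [Finset.coe_biUnion]
      refine Set.mem_iUnion₂.mpr ⟨u.length, ?_, ?_⟩
      · simp only [Finset.coe_range, Set.mem_Iio]
        have := (hwin u hu).2
        omega
      · rw [Finset.mem_coe, S.mem_lvlExt S.nil_isWord]
        exact ⟨List.nil_prefix, by simp, hcut.1 u hu⟩
    have hfin : A.Finite := Set.Finite.subset (Finset.finite_toSet _) hAsub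
    have hAeq : A = ↑hfin.toFinset := (Set.Finite.coe_toFinset hfin).symm
    rw [hAeq, Finset.tsum_subtype' hfin.toFinset (fun u => diam (S.Jmap u) ^ s)] at hsum
    have hne : hfin.toFinset.Nonempty := by
      have hone : IsInfWord S.n (fun _ => 1) := by
        intro k hk
        exact ⟨le_refl 1, le_trans one_le_two (S.hn k hk)⟩
      obtain ⟨U, hU⟩ := Set.mem_iUnion₂.mp (hcut.2.2 hone)
      obtain ⟨hU1, -⟩ := hU
      exact ⟨U, hfin.mem_toFinset.mpr hU1⟩
    by_contra hlt
    push_neg at hlt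
    have hkey : ∀ u ∈ hfin.toFinset, 1 / S.Nprod u.length < diam (S.Jmap u) ^ s := by
      intro u hu
      have huA : u ∈ A := hfin.mem_toFinset.mp hu
      obtain ⟨h1, h2⟩ := hwin u huA
      have hword := hcut.1 u huA
      have hlen1 : 1 ≤ u.length := le_trans hk₀1 h1
      have hdiam : diam (S.Jmap u) = S.cHomProd u.length :=
        S.word_diam hhom hJdiam hword
      rw [hdiam, ← S.rpow_sHom hd hhom hlen1]
      exact Real.rpow_lt_rpow_of_exponent_gt (S.cHomProd_pos _)
        (S.cHomProd_lt_one hd hhom hlen1) (lt_of_lt_of_le hlt (hμlb _ h1 h2))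
    have hweight : 1 ≤ ∑ u ∈ hfin.toFinset, 1 / S.Nprod u.length := by
      refine S.cut_weight hfin.toFinset (B := L₀) ?_ ?_
      · intro u hu
        exact ⟨hcut.1 u (hfin.mem_toFinset.mp hu), (hwin u (hfin.mem_toFinset.mp hu)).2⟩
      · intro v hv
        obtain ⟨U, hU⟩ := Set.mem_iUnion₂.mp (hcut.2.2 hv)
        obtain ⟨hU1, hU2⟩ := hU
        exact ⟨U, hfin.mem_toFinset.mpr hU1, hU2⟩
    have hstrict := Finset.sum_lt_sum_of_nonempty hne hkey
    rw [hsum] at hstrict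
    linarith
  rw [sdt]
  exact le_antisymm (csInf_le ⟨μ, hμlow⟩ hμmem) (le_csInf ⟨μ, hμmem⟩ hμlow)

theorem le_kOf_of_le (hd : 1 ≤ d) (S : MoranStructure X d) (hhom : S.Homogeneous)
    {δ : ℝ} {K : ℕ} (hδ0 : 0 < δ) (h : δ ≤ S.cHomProd K) : K ≤ S.kOf δ := by
  by_contra hcon
  push_neg at hcon
  have h2 := S.kOf_spec hd hhom hδ0
  have h3 := S.cHomProd_strict_anti hd hhom hcon
  linarith

theorem kOf_cHomProd (hd : 1 ≤ d) (S : MoranStructure X d) (hhom : S.Homogeneous)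
    {k : ℕ} (hk : 1 ≤ k) : S.kOf (S.cHomProd k) = k := by
  refine le_antisymm (S.kOf_le le_rfl) ?_
  by_contra h
  push_neg at h
  have h2 := S.kOf_spec hd hhom (S.cHomProd_pos k)
  have h3 := S.cHomProd_strict_anti hd hhom h
  linarith

theorem one_le_one_div_theta {θ : ℝ} (hθ : θ ∈ Set.Ioc (0:ℝ) 1) : 1 ≤ 1/θ := by
  rw [le_div_iff₀ hθ.1]; linarith [hθ.2]

theorem l_ge (hd : 1 ≤ d) (S : MoranStructure X d) (hhom : S.Homogeneous)
    {θ : ℝ} (hθ : θ ∈ Set.Ioc (0:ℝ) 1) {l : ℕ → ℕ} (hl : S.IsLk θ l)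
    {k : ℕ} (hk : 1 ≤ k) : k ≤ l k := by
  obtain ⟨h1, -⟩ := hl k hk
  have h2 : S.cHomProd k ^ (1/θ) ≤ S.cHomProd k := by
    have := Real.rpow_le_rpow_of_exponent_ge (S.cHomProd_pos k)
      (S.cHomProd_le_one hd hhom k) (one_le_one_div_theta hθ)
    rwa [Real.rpow_one] at this
  by_contra h
  push_neg at h
  have := S.cHomProd_strict_anti hd hhom h
  linarith

theorem kOf_rpow_eq_l (hd : 1 ≤ d) (S : MoranStructure X d) (hhom : S.Homogeneous)
    {θ : ℝ} (hθ : θ ∈ Set.Ioc (0:ℝ) 1) {l : ℕ → ℕ} (hl : S.IsLk θ l)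
    {k : ℕ} (hk : 1 ≤ k) : S.kOf (S.cHomProd k ^ (1/θ)) = l k := by
  obtain ⟨h1, h2⟩ := hl k hk
  refine le_antisymm (S.kOf_le h1) ?_
  by_contra h
  push_neg at h
  have h3 := S.kOf_spec hd hhom (Real.rpow_pos_of_pos (S.cHomProd_pos k) (1/θ))
  have h4 : S.cHomProd (l k - 1) ≤ S.cHomProd (S.kOf (S.cHomProd k ^ (1/θ))) :=
    S.cHomProd_anti hd hhom (by omega)
  linarith

theorem sdt_bounds (hd : 1 ≤ d) (S : MoranStructure X d) (hhom : S.Homogeneous)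
    (hJdiam : diam S.J = 1) {θ δ : ℝ} (hθ : θ ∈ Set.Ioc (0:ℝ) 1)
    (hδ0 : 0 < δ) (hδ1 : δ < 1) : 0 ≤ S.sdt δ θ ∧ S.sdt δ θ ≤ d := by
  rw [S.sdt_eq_min hd hhom hJdiam hθ hδ0 hδ1]
  have hδ'0 : 0 < δ ^ (1/θ) := Real.rpow_pos_of_pos hδ0 _
  have hδ'δ : δ ^ (1/θ) ≤ δ := by
    have := Real.rpow_le_rpow_of_exponent_ge hδ0 hδ1.le (one_le_one_div_theta hθ)
    rwa [Real.rpow_one] at this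
  set W : Set ℝ := {x | ∃ m, S.kOf δ ≤ m ∧ m ≤ S.kOf (δ ^ (1/θ)) ∧ x = S.sHom m} with hW
  have hWeq : W = S.sHom '' (Set.Icc (S.kOf δ) (S.kOf (δ ^ (1/θ)))) := by
    ext x
    constructor
    · rintro ⟨m, ha, hb, rfl⟩; exact ⟨m, ⟨ha, hb⟩, rfl⟩
    · rintro ⟨m, ⟨ha, hb⟩, rfl⟩; exact ⟨m, ha, hb, rfl⟩
  have hWfin : W.Finite := by rw [hWeq]; exact (Set.finite_Icc _ _).image _
  have hWne : W.Nonempty := ⟨S.sHom (S.kOf δ), S.kOf δ, le_rfl,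
    S.kOf_mono hd hhom hδ'0 hδ'δ, rfl⟩
  obtain ⟨m, -, -, hm⟩ := hWne.csInf_mem hWfin
  rw [hm]
  exact ⟨S.sHom_nonneg hd hhom m, S.sHom_le_d hd hhom m⟩

/-- Core asymptotic estimate : for small `δ`, `s_{δ,θ}` is at most
`min_{kOf δ ≤ m ≤ l (kOf δ)} s_m + ε`. -/
theorem est (hd : 1 ≤ d) (S : MoranStructure X d) (hhom : S.Homogeneous)
    (hJdiam : diam S.J = 1)
    (hlim : Tendsto (fun k => Real.log (S.c k 1) / Real.log (S.cHomProd k)) atTop (nhds 0))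
    {θ : ℝ} (hθ : θ ∈ Set.Ioc (0:ℝ) 1) {l : ℕ → ℕ} (hl : S.IsLk θ l) :
    ∀ ε : ℝ, 0 < ε → ∃ K : ℕ, 1 ≤ K ∧ ∀ δ : ℝ, 0 < δ → δ ≤ S.cHomProd K →
      S.sdt δ θ ≤ sInf {x | ∃ m, S.kOf δ ≤ m ∧ m ≤ l (S.kOf δ) ∧ x = S.sHom m} + ε := by
  intro ε hε
  have hθ0 := hθ.1
  have hd0 : (0:ℝ) < d := by
    have : (1:ℝ) ≤ d := by exact_mod_cast hd
    linarith
  set η := min (ε / (2*d)) (1/2) with hηdef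
  have hη0 : 0 < η := lt_min (by positivity) (by norm_num)
  have hη2 : η ≤ 1/2 := min_le_right _ _
  have hηε : 2 * d * η ≤ ε := by
    have h1 := min_le_left (ε/(2*d)) (1/2)
    calc 2*d*η ≤ 2*d*(ε/(2*d)) := by nlinarith
      _ = ε := by field_simp
  have hb : ∀ᶠ k in atTop, -Real.log (S.c k 1) ≤ η * (-Real.log (S.cHomProd k)) := by
    obtain ⟨N, hN⟩ := Metric.tendsto_atTop.mp hlim η hη0
    filter_upwards [eventually_ge_atTop (max N 1)] with k hk
    have hk1 : 1 ≤ k := le_trans (le_max_right N 1) hk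
    have hkN : N ≤ k := le_trans (le_max_left N 1) hk
    have h2 := hN k hkN
    rw [Real.dist_eq, sub_zero] at h2
    have hlogC := S.logC_neg hd hhom hk1
    have hratio : Real.log (S.c k 1) / Real.log (S.cHomProd k)
        = (-Real.log (S.c k 1)) / (-Real.log (S.cHomProd k)) := by rw [neg_div_neg_eq]
    rw [hratio] at h2
    have h3 : (-Real.log (S.c k 1)) / (-Real.log (S.cHomProd k)) < η := lt_of_abs_lt h2
    have hBpos : 0 < -Real.log (S.cHomProd k) := by linarith
    calc -Real.log (S.c k 1)
        = ((-Real.log (S.c k 1)) / (-Real.log (S.cHomProd k))) * (-Real.log (S.cHomProd k)) :=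
          (div_mul_cancel₀ _ (ne_of_gt hBpos)).symm
      _ ≤ η * (-Real.log (S.cHomProd k)) := by nlinarith
  obtain ⟨K₁, hK₁⟩ := eventually_atTop.mp hb
  refine ⟨max K₁ 1, le_max_right _ _, ?_⟩
  intro δ hδ0 hδle
  have hK1 : 1 ≤ max K₁ 1 := le_max_right _ _
  have hδ1 : δ < 1 := lt_of_le_of_lt hδle (S.cHomProd_lt_one hd hhom hK1)
  have hδ'0 : 0 < δ ^ (1/θ) := Real.rpow_pos_of_pos hδ0 _
  set k := S.kOf δ with hkdef
  set L := S.kOf (δ ^ (1/θ)) with hLdef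
  have hkK : max K₁ 1 ≤ k := S.le_kOf_of_le hd hhom hδ0 hδle
  have hk1 : 1 ≤ k := le_trans hK1 hkK
  have hlk := hl k hk1
  have hCk : S.cHomProd k ≤ δ := S.kOf_spec hd hhom hδ0
  have hLle : L ≤ l k := S.kOf_le (le_trans hlk.1
    (Real.rpow_le_rpow (S.cHomProd_pos k).le hCk (by positivity)))
  rw [S.sdt_eq_min hd hhom hJdiam hθ hδ0 hδ1]
  have hδ'δ : δ ^ (1/θ) ≤ δ := by
    have := Real.rpow_le_rpow_of_exponent_ge hδ0 hδ1.le (one_le_one_div_theta hθ)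
    rwa [Real.rpow_one] at this
  have hkL : k ≤ L := S.kOf_mono hd hhom hδ'0 hδ'δ
  have hL1 : 1 ≤ L := le_trans hk1 hkL
  have hlk1 : 1 ≤ l k := le_trans hL1 hLle
  set W₁ : Set ℝ := {x | ∃ m, k ≤ m ∧ m ≤ L ∧ x = S.sHom m} with hW₁
  set W₂ : Set ℝ := {x | ∃ m, k ≤ m ∧ m ≤ l k ∧ x = S.sHom m} with hW₂
  have hW₁eq : W₁ = S.sHom '' (Set.Icc k L) := by
    ext x
    constructor
    · rintro ⟨m, ha, hb', rfl⟩; exact ⟨m, ⟨ha, hb'⟩, rfl⟩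
    · rintro ⟨m, ⟨ha, hb'⟩, rfl⟩; exact ⟨m, ha, hb', rfl⟩
  have hW₂eq : W₂ = S.sHom '' (Set.Icc k (l k)) := by
    ext x
    constructor
    · rintro ⟨m, ha, hb', rfl⟩; exact ⟨m, ⟨ha, hb'⟩, rfl⟩
    · rintro ⟨m, ⟨ha, hb'⟩, rfl⟩; exact ⟨m, ha, hb', rfl⟩
  have hW₁fin : W₁.Finite := by rw [hW₁eq]; exact (Set.finite_Icc _ _).image _
  have hW₂fin : W₂.Finite := by rw [hW₂eq]; exact (Set.finite_Icc _ _).image _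
  have hW₂ne : W₂.Nonempty := ⟨S.sHom k, k, le_rfl, le_trans hkL hLle, rfl⟩
  obtain ⟨m₁, hm₁1, hm₁2, hm₁⟩ := hW₂ne.csInf_mem hW₂fin
  rcases le_or_gt m₁ L with hcase | hcase
  · have h5 : sInf W₁ ≤ S.sHom m₁ := csInf_le hW₁fin.bddBelow ⟨m₁, hm₁1, hcase, rfl⟩
    rw [← hm₁] at h5
    linarith
  · have hsInfL : sInf W₁ ≤ S.sHom L := csInf_le hW₁fin.bddBelow ⟨L, hkL, le_rfl, rfl⟩
    have hm₁1' : 1 ≤ m₁ := le_trans hk1 hm₁1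
    -- abbreviations
    have hBLpos : (0:ℝ) < -Real.log (S.cHomProd L) := by
      linarith [S.logC_neg hd hhom hL1]
    have hBlkpos : (0:ℝ) < -Real.log (S.cHomProd (l k)) := by
      linarith [S.logC_neg hd hhom hlk1]
    have hBm₁pos : (0:ℝ) < -Real.log (S.cHomProd m₁) := by
      linarith [S.logC_neg hd hhom hm₁1']
    have hBkpos : (0:ℝ) < -Real.log (S.cHomProd k) := by
      linarith [S.logC_neg hd hhom hk1]
    have hsplit : ∀ m : ℕ, Real.log (S.cHomProd (m+1))
        = Real.log (S.cHomProd m) + Real.log (S.c (m+1) 1) := by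
      intro m
      rw [S.cHomProd_succ, Real.log_mul (ne_of_gt (S.cHomProd_pos _))
        (ne_of_gt (S.aux_c_pos (Nat.succ_le_succ (Nat.zero_le m))))]
    have hbk : -Real.log (S.c k 1) ≤ η * (-Real.log (S.cHomProd k)) :=
      hK₁ k (le_trans (le_max_left _ _) hkK)
    have hblk : -Real.log (S.c (l k) 1) ≤ η * (-Real.log (S.cHomProd (l k))) :=
      hK₁ (l k) (le_trans (le_trans (le_max_left _ _) hkK) (le_trans hkL hLle))
    -- B(l k - 1) < (1/θ) B k
    have hBlk1 : -Real.log (S.cHomProd (l k - 1)) < (1/θ) * (-Real.log (S.cHomProd k)) := by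
      have h3 : Real.log (S.cHomProd k ^ (1/θ)) < Real.log (S.cHomProd (l k - 1)) :=
        Real.log_lt_log (Real.rpow_pos_of_pos (S.cHomProd_pos k) _) hlk.2
      rw [Real.log_rpow (S.cHomProd_pos k)] at h3
      linarith
    have hsplitlk : Real.log (S.cHomProd (l k))
        = Real.log (S.cHomProd (l k - 1)) + Real.log (S.c (l k) 1) := by
      have e : l k = (l k - 1) + 1 := by omega
      conv_lhs => rw [e]
      rw [hsplit, ← e]
    have hBlkle : (-Real.log (S.cHomProd (l k))) * (1 - η) ≤ (1/θ) * (-Real.log (S.cHomProd k)) := by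
      linarith [hblk, hBlk1, hsplitlk]
    -- (1-η) B k ≤ B (k-1)
    have hsplitk : Real.log (S.cHomProd k)
        = Real.log (S.cHomProd (k - 1)) + Real.log (S.c k 1) := by
      have e : k = (k - 1) + 1 := by omega
      conv_lhs => rw [e]
      rw [hsplit, ← e]
    have hBk1 : (1 - η) * (-Real.log (S.cHomProd k)) ≤ -Real.log (S.cHomProd (k-1)) := by
      linarith [hbk, hsplitk]
    have hδBk : -Real.log (S.cHomProd (k-1)) ≤ -Real.log δ := by
      have h5 : δ < S.cHomProd (k-1) := S.lt_of_lt_kOf (by omega)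
      have := Real.log_lt_log hδ0 h5
      linarith
    have hBL : (1/θ) * ((1-η) * (-Real.log (S.cHomProd k))) ≤ -Real.log (S.cHomProd L) := by
      have h6 : S.cHomProd L ≤ δ ^ (1/θ) := S.kOf_spec hd hhom hδ'0
      have h7 : Real.log (S.cHomProd L) ≤ Real.log (δ ^ (1/θ)) :=
        Real.log_le_log (S.cHomProd_pos L) h6
      rw [Real.log_rpow hδ0] at h7
      have hpos : (0:ℝ) < 1/θ := by positivity
      have h8 := mul_le_mul_of_nonneg_left hδBk hpos.le
      have h9 := mul_le_mul_of_nonneg_left hBk1 hpos.le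
      linarith [h7, h8, h9]
    -- ratio bound
    have hη1 : (0:ℝ) < 1 - η := by linarith
    have hratio : (1 - 2*η) * (-Real.log (S.cHomProd (l k))) ≤ -Real.log (S.cHomProd L) := by
      have step1 : (1-η) * (-Real.log (S.cHomProd (l k))) ≤ (1/θ) * (-Real.log (S.cHomProd k)) := by
        linarith [hBlkle]
      have step2 : (1-η) * ((1-η) * (-Real.log (S.cHomProd (l k))))
          ≤ (1-η) * ((1/θ) * (-Real.log (S.cHomProd k))) :=
        mul_le_mul_of_nonneg_left step1 hη1.le
      have step3 : (1-η) * ((1-η) * (-Real.log (S.cHomProd (l k)))) ≤ -Real.log (S.cHomProd L) := by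
        linarith [step2, hBL]
      have step4 : 0 ≤ η^2 * (-Real.log (S.cHomProd (l k))) :=
        mul_nonneg (sq_nonneg η) hBlkpos.le
      linarith [step3, step4]
    -- final comparison
    have hLn1 : Real.log (S.Nprod L) ≤ Real.log (S.Nprod m₁) :=
      Real.log_le_log (S.Nprod_pos L) (S.Nprod_mono hcase.le)
    have hBm : -Real.log (S.cHomProd m₁) ≤ -Real.log (S.cHomProd (l k)) := by
      have := Real.log_le_log (S.cHomProd_pos (l k)) (S.cHomProd_anti hd hhom hm₁2)
      linarith
    have h12 : Real.log (S.Nprod L) / (-Real.log (S.cHomProd (l k))) ≤ S.sHom m₁ := by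
      rw [S.sHom_eq']
      exact div_le_div₀ (Real.log_nonneg (S.one_le_Nprod m₁)) hLn1 hBm₁pos hBm
    have hr : Real.log (S.Nprod L) / (-Real.log (S.cHomProd (l k)))
        = S.sHom L * ((-Real.log (S.cHomProd L)) / (-Real.log (S.cHomProd (l k)))) := by
      rw [S.sHom_eq', div_mul_div_comm, mul_comm (Real.log (S.Nprod L)) _,
        mul_div_mul_left _ _ (ne_of_gt hBLpos)]
    have hs1 : S.sHom L ≤ d := S.sHom_le_d hd hhom L
    have hs0 : 0 ≤ S.sHom L := S.sHom_nonneg hd hhom L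
    have hr1 : 1 - 2*η ≤ (-Real.log (S.cHomProd L)) / (-Real.log (S.cHomProd (l k))) := by
      rw [le_div_iff₀ hBlkpos]
      linarith [hratio]
    have hr2 : (-Real.log (S.cHomProd L)) / (-Real.log (S.cHomProd (l k))) ≤ 1 := by
      rw [div_le_one hBlkpos]
      have := Real.log_le_log (S.cHomProd_pos (l k)) (S.cHomProd_anti hd hhom hLle)
      linarith
    have hkey : S.sHom L ≤ S.sHom m₁ + ε := by
      have hprod : S.sHom L * (1 - ((-Real.log (S.cHomProd L)) / (-Real.log (S.cHomProd (l k)))))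
          ≤ (d:ℝ) * (2*η) := by
        refine mul_le_mul hs1 (by linarith) (by linarith) hd0.le
      have h13 := h12
      rw [hr] at h13
      linarith [hprod, hηε, h13]
    rw [← hm₁] at hkey
    linarith

theorem g_bounds (hd : 1 ≤ d) (S : MoranStructure X d) (hhom : S.Homogeneous)
    {θ : ℝ} (hθ : θ ∈ Set.Ioc (0:ℝ) 1) {l : ℕ → ℕ} (hl : S.IsLk θ l)
    {k : ℕ} (hk : 1 ≤ k) :
    0 ≤ sInf {x : ℝ | ∃ m, k ≤ m ∧ m ≤ l k ∧ x = S.sHom m} ∧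
      sInf {x : ℝ | ∃ m, k ≤ m ∧ m ≤ l k ∧ x = S.sHom m} ≤ d := by
  have hkl : k ≤ l k := S.l_ge hd hhom hθ hl hk
  have hWeq : {x : ℝ | ∃ m, k ≤ m ∧ m ≤ l k ∧ x = S.sHom m}
      = S.sHom '' Set.Icc k (l k) := by
    ext x
    constructor
    · rintro ⟨m, ha, hb, rfl⟩; exact ⟨m, ⟨ha, hb⟩, rfl⟩
    · rintro ⟨m, ⟨ha, hb⟩, rfl⟩; exact ⟨m, ha, hb, rfl⟩
  have hfin : {x : ℝ | ∃ m, k ≤ m ∧ m ≤ l k ∧ x = S.sHom m}.Finite := by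
    rw [hWeq]; exact (Set.finite_Icc _ _).image _
  have hne : {x : ℝ | ∃ m, k ≤ m ∧ m ≤ l k ∧ x = S.sHom m}.Nonempty :=
    ⟨S.sHom k, k, le_rfl, hkl, rfl⟩
  obtain ⟨m, -, -, hm⟩ := hne.csInf_mem hfin
  rw [hm]
  exact ⟨S.sHom_nonneg hd hhom m, S.sHom_le_d hd hhom m⟩

end MoranStructure

end AuxMoran

/-- **Proposition 3.4.** For a homogeneous Moran set with `c_* = 0`, `|J| = 1` and
`lim_k log(c_k)/log(c₁⋯c_k) = 0`, for every `θ ∈ (0,1]`,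
`s^θ = limsup_k min_{k ≤ m ≤ l(k,θ)} s_m` where `s_m = -log(n₁⋯n_m)/log(c₁⋯c_m)`
and `s^θ = limsup_{δ→0} s_{δ,θ}`. -/
theorem sUpper_eq_limsup_min_homogeneous_cstar_zero {d : ℕ} (hd : 1 ≤ d)
    (S : MoranStructure (EuclideanSpace ℝ (Fin d)) d)
    (hhom : S.Homogeneous)
    (hc : sInf {x : ℝ | ∃ k, 1 ≤ k ∧ x = S.c k 1} = 0)
    (hJdiam : Metric.diam S.J = 1)
    (hlim : Filter.Tendsto (fun k => Real.log (S.c k 1) / Real.log (S.cHomProd k))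
      Filter.atTop (nhds 0)) :
    ∀ θ : ℝ, θ ∈ Set.Ioc (0 : ℝ) 1 → ∀ l : ℕ → ℕ, S.IsLk θ l →
      S.sUpper θ =
        Filter.limsup (fun k => sInf {x : ℝ | ∃ m, k ≤ m ∧ m ≤ l k ∧ x = S.sHom m})
          Filter.atTop := by
  intro θ hθ l hl
  rw [MoranStructure.sUpper]
  set F : ℝ → ℝ := fun δ => S.sdt δ θ with hF
  set g : ℕ → ℝ := fun k => sInf {x : ℝ | ∃ m, k ≤ m ∧ m ≤ l k ∧ x = S.sHom m} with hg
  have hFb : ∀ᶠ δ in 𝓝[>] (0:ℝ), 0 ≤ F δ ∧ F δ ≤ d := by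
    filter_upwards [Ioo_mem_nhdsGT_of_mem (Set.mem_Ico.mpr ⟨le_refl (0:ℝ), zero_lt_one⟩)]
      with δ hδ
    exact S.sdt_bounds hd hhom hJdiam hθ hδ.1 hδ.2
  have hgb : ∀ᶠ k in atTop, 0 ≤ g k ∧ g k ≤ d := by
    filter_upwards [eventually_ge_atTop 1] with k hk
    exact S.g_bounds hd hhom hθ hl hk
  have hFbdd : Filter.IsBoundedUnder (· ≤ ·) (𝓝[>] (0:ℝ)) F :=
    isBoundedUnder_of_eventually_le (hFb.mono fun δ h => h.2)
  have hFcob : Filter.IsCoboundedUnder (· ≤ ·) (𝓝[>] (0:ℝ)) F :=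
    (isBoundedUnder_of_eventually_ge (hFb.mono fun δ h => h.1)).isCoboundedUnder_le
  have hgbdd : Filter.IsBoundedUnder (· ≤ ·) atTop g :=
    isBoundedUnder_of_eventually_le (hgb.mono fun k h => h.2)
  have hgcob : Filter.IsCoboundedUnder (· ≤ ·) atTop g :=
    (isBoundedUnder_of_eventually_ge (hgb.mono fun k h => h.1)).isCoboundedUnder_le
  have hCt : Tendsto S.cHomProd atTop (𝓝[>] (0:ℝ)) := by
    rw [tendsto_nhdsWithin_iff]
    constructor
    · exact squeeze_zero (fun k => (S.cHomProd_pos k).le) (S.cHomProd_le_pow hd hhom)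
        (tendsto_pow_atTop_nhds_zero_of_lt_one (by positivity)
          (MoranStructure.aux_q_lt_one hd))
    · exact Eventually.of_forall (fun k => S.cHomProd_pos k)
  have heq : ∀ᶠ k in atTop, g k = F (S.cHomProd k) := by
    filter_upwards [eventually_ge_atTop 1] with k hk
    show sInf {x : ℝ | ∃ m, k ≤ m ∧ m ≤ l k ∧ x = S.sHom m} = S.sdt (S.cHomProd k) θ
    rw [S.sdt_eq_min hd hhom hJdiam hθ (S.cHomProd_pos k) (S.cHomProd_lt_one hd hhom hk),
      S.kOf_cHomProd hd hhom hk, S.kOf_rpow_eq_l hd hhom hθ hl hk]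
  refine le_antisymm ?_ ?_
  · -- limsup F ≤ limsup g
    refine le_of_forall_pos_le_add ?_
    intro ε hε
    obtain ⟨K₁, hK₁1, hK₁⟩ := S.est hd hhom hJdiam hlim hθ hl (ε/2) (by positivity)
    have hR : ∀ᶠ k in atTop, g k < limsup g atTop + ε/2 :=
      eventually_lt_of_limsup_lt (by linarith) hgbdd
    obtain ⟨K₂, hK₂⟩ := eventually_atTop.mp hR
    have hev : ∀ᶠ δ in 𝓝[>] (0:ℝ), F δ ≤ limsup g atTop + ε := by
      have hIoc : Set.Ioc (0:ℝ) (S.cHomProd (max K₁ K₂)) ∈ 𝓝[>] (0:ℝ) :=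
        Ioc_mem_nhdsGT_of_mem (Set.mem_Ico.mpr ⟨le_refl 0, S.cHomProd_pos _⟩)
      filter_upwards [hIoc] with δ hδ
      have hδ0 := hδ.1
      have hδle : δ ≤ S.cHomProd (max K₁ K₂) := hδ.2
      have hδleK₁ : δ ≤ S.cHomProd K₁ :=
        le_trans hδle (S.cHomProd_anti hd hhom (le_max_left _ _))
      have h4 := hK₁ δ hδ0 hδleK₁
      have hkK : max K₁ K₂ ≤ S.kOf δ := S.le_kOf_of_le hd hhom hδ0 hδle
      have h5 := hK₂ (S.kOf δ) (le_trans (le_max_right _ _) hkK)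
      show S.sdt δ θ ≤ limsup g atTop + ε
      have h6 : g (S.kOf δ) = sInf {x : ℝ | ∃ m, S.kOf δ ≤ m ∧ m ≤ l (S.kOf δ)
          ∧ x = S.sHom m} := rfl
      rw [h6] at h5
      linarith [h4, h5]
    exact limsup_le_of_le hFcob hev
  · -- limsup g ≤ limsup F
    refine le_of_forall_pos_le_add ?_
    intro ε hε
    have h1 : ∀ᶠ δ in 𝓝[>] (0:ℝ), F δ < limsup F (𝓝[>] (0:ℝ)) + ε :=
      eventually_lt_of_limsup_lt (by linarith) hFbdd
    have h2 : ∀ᶠ k in atTop, F (S.cHomProd k) < limsup F (𝓝[>] (0:ℝ)) + ε :=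
      hCt.eventually h1
    have h3 : ∀ᶠ k in atTop, g k ≤ limsup F (𝓝[>] (0:ℝ)) + ε := by
      filter_upwards [heq, h2] with k ha hb
      rw [ha]
      exact hb.le
    exact limsup_le_of_le hgcob h3
end
end
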